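/- arXiv:2412.20204 — 5 statements merged into one kernel-verified Lean document; each statement's English description precedes it below -/
import Mathlib

section
/- Let Θ ⊂ ℝ^p be convex and compact, let s ≥ 1, and let A be a map from ℝ^p to the d×d real symmetric positive semidefinite matrices that is s-times continuously differentiable on Θ. Suppose the rank of A(θ) is a constant r with 1 ≤ r ≤ d for all θ ∈ Θ, and every nonzero eigenvalue of A(θ) lies in [λ̲, λ̄] for some 0 < λ̲ ≤ λ̄ < ∞ and all θ ∈ Θ. Then there exists δ > 0 such that for every θ₀ ∈ Θ there exist matrix-valued maps M (d×d) and B (r×r), both s-times continuously differentiable on the set {θ ∈ Θ : ‖θ − θ₀‖ ≤ δ}, and constants 0 < λ̲_B ≤ λ̄_B < ∞, such that for all θ in that set: M(θ)·M(θ)ᵀ = I_d, B(θ) is symmetric with all eigenvalues in [λ̲_B, λ̄_B], and A(θ) = M(θ) · blockdiag[B(θ), 0_{m×m}] · M(θ)ᵀ, where m = d − r and blockdiag[B, 0] denotes the d×d block-diagonal matrix with upper-left block B and lower-right block the m×m zero matrix. -/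
/-!
Near `θ₀`, conjugate by a fixed orthogonal matrix that diagonalises `A θ₀` with its nonzero
eigenvalues first. The leading `r × r` block `a θ` of the conjugated matrix then stays invertible,
and since the rank is `r` its Schur complement vanishes: the conjugated matrix is
`[1; X] * a * [1, Xᵀ]` with `X = b * a⁻¹`. If `C` and `D` are symmetric square roots of
`1 + Xᵀ X` and `1 + X Xᵀ`, the matrix `[[C⁻¹, -Xᵀ D⁻¹], [X C⁻¹, D⁻¹]]` is orthogonal and
conjugates `blockdiag (C a C, 0)` to it. Square roots near `1` depend analytically on the matrix
(inverse function theorem), and `X θ₀ = 0`, so all of this is as smooth as `A` near `θ₀`.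
`B = C a C` is invertible and its spectrum lies in that of `A θ`, so its eigenvalues are nonzero
eigenvalues of `A θ`. A Lebesgue number of the resulting cover of the compact `Θ` is the `δ`.
-/

open Matrix Set Filter Metric
open scoped ContDiff Topology

attribute [local instance] Matrix.normedAddCommGroup Matrix.normedSpace

section Smoothness

variable {E : Type*} [NormedAddCommGroup E] [NormedSpace ℝ E] {k : WithTop ℕ∞} {S : Set E}
  {ι κ o : Type*} [Fintype ι] [Fintype κ] [Fintype o]

theorem contDiffOn_matrix {f : E → Matrix ι κ ℝ} :
    ContDiffOn ℝ k f S ↔ ∀ i j, ContDiffOn ℝ k (fun x => f x i j) S :=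
  contDiffOn_pi.trans (forall_congr' fun _ => contDiffOn_pi)

theorem ContDiffOn.matrix_apply {f : E → Matrix ι κ ℝ} (hf : ContDiffOn ℝ k f S) (i : ι) (j : κ) :
    ContDiffOn ℝ k (fun x => f x i j) S :=
  contDiffOn_matrix.1 hf i j

theorem ContDiffOn.matrix_submatrix {ι' κ' : Type*} [Fintype ι'] [Fintype κ']
    {f : E → Matrix ι κ ℝ} (hf : ContDiffOn ℝ k f S) (r : ι' → ι) (c : κ' → κ) :
    ContDiffOn ℝ k (fun x => (f x).submatrix r c) S :=
  contDiffOn_matrix.2 fun i j => hf.matrix_apply (r i) (c j)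

theorem ContDiffOn.matrix_transpose {f : E → Matrix ι κ ℝ} (hf : ContDiffOn ℝ k f S) :
    ContDiffOn ℝ k (fun x => (f x)ᵀ) S :=
  contDiffOn_matrix.2 fun i j => hf.matrix_apply j i

theorem ContDiffOn.matrix_mul {f : E → Matrix ι κ ℝ} {g : E → Matrix κ o ℝ}
    (hf : ContDiffOn ℝ k f S) (hg : ContDiffOn ℝ k g S) :
    ContDiffOn ℝ k (fun x => f x * g x) S :=
  contDiffOn_matrix.2 fun i j =>
    ContDiffOn.sum fun m _ => (hf.matrix_apply i m).mul (hg.matrix_apply m j)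

theorem ContDiffOn.matrix_fromBlocks {ι' κ' : Type*} [Fintype ι'] [Fintype κ']
    {a : E → Matrix ι κ ℝ} {b : E → Matrix ι κ' ℝ} {c : E → Matrix ι' κ ℝ}
    {d : E → Matrix ι' κ' ℝ} (ha : ContDiffOn ℝ k a S) (hb : ContDiffOn ℝ k b S)
    (hc : ContDiffOn ℝ k c S) (hd : ContDiffOn ℝ k d S) :
    ContDiffOn ℝ k (fun x => fromBlocks (a x) (b x) (c x) (d x)) S := by
  refine contDiffOn_matrix.2 ?_
  rintro (i | i) (j | j)
  exacts [ha.matrix_apply i j, hb.matrix_apply i j, hc.matrix_apply i j, hd.matrix_apply i j]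

variable [DecidableEq ι]

theorem ContDiffOn.matrix_det {f : E → Matrix ι ι ℝ} (hf : ContDiffOn ℝ k f S) :
    ContDiffOn ℝ k (fun x => (f x).det) S := by
  simp only [det_apply']
  exact ContDiffOn.sum fun σ _ =>
    contDiffOn_const.mul (contDiffOn_prod fun i _ => hf.matrix_apply (σ i) i)

theorem ContDiffOn.matrix_inv {f : E → Matrix ι ι ℝ} (hf : ContDiffOn ℝ k f S)
    (hu : ∀ x ∈ S, IsUnit (f x).det) : ContDiffOn ℝ k (fun x => (f x)⁻¹) S := by
  have hadj : ContDiffOn ℝ k (fun x => (f x).adjugate) S := by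
    refine contDiffOn_matrix.2 fun i j => ?_
    simp only [adjugate_apply]
    refine ContDiffOn.matrix_det (contDiffOn_matrix.2 fun a b => ?_)
    rcases eq_or_ne a j with rfl | hne
    · simpa only [updateRow_self] using contDiffOn_const
    · simpa only [updateRow_ne hne] using hf.matrix_apply a b
  refine ((hf.matrix_det.inv fun x hx => (hu x hx).ne_zero).smul hadj).congr fun x _ => ?_
  rw [inv_def, Ring.inverse_eq_inv']
  rfl

end Smoothness

section Sqrt

variable {ι : Type*} [Fintype ι] [DecidableEq ι]

theorem Matrix.hasFDerivAt_mul_self_one :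
    HasFDerivAt (fun Y : Matrix ι ι ℝ => Y * Y)
      ((ContinuousLinearEquiv.smulLeft (Units.mk0 (2 : ℝ) two_ne_zero) :
        Matrix ι ι ℝ ≃L[ℝ] Matrix ι ι ℝ) : Matrix ι ι ℝ →L[ℝ] Matrix ι ι ℝ) 1 := by
  let mul : Matrix ι ι ℝ →L[ℝ] Matrix ι ι ℝ →L[ℝ] Matrix ι ι ℝ :=
    LinearMap.toContinuousLinearMap
      (LinearMap.toContinuousLinearMap.toLinearMap ∘ₗ LinearMap.mul ℝ (Matrix ι ι ℝ))
  refine (mul.hasFDerivAt_of_bilinear (hasFDerivAt_id 1) (hasFDerivAt_id 1)).congr_fderiv ?_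
  ext Y : 1
  change 1 * Y + Y * 1 = (2 : ℝ) • Y
  rw [one_mul, mul_one, two_smul]

theorem Matrix.exists_sqrt_nhds_one : ∃ g : Matrix ι ι ℝ → Matrix ι ι ℝ, ∃ V ∈ 𝓝 (1 : Matrix ι ι ℝ),
    ∀ Z ∈ V, ContDiffAt ℝ ω g Z ∧ g Z * g Z = Z ∧ IsUnit (g Z).det ∧ (Z.IsSymm → (g Z).IsSymm) := by
  have hsq : ContDiffAt ℝ ω (fun Y : Matrix ι ι ℝ => Y * Y) 1 :=
    (contDiffOn_univ.1 (contDiffOn_id.matrix_mul contDiffOn_id)).contDiffAt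
  have hω : (ω : WithTop ℕ∞) ≠ 0 := by simp
  have hst := hsq.hasStrictFDerivAt' hasFDerivAt_mul_self_one hω
  set g := hst.localInverse _ _ _
  have hg1 : g 1 = 1 := by simpa using hst.localInverse_apply_image
  have hsmooth : ∀ᶠ Z in 𝓝 1, ContDiffAt ℝ ω g Z := by
    have h := (hsq.to_localInverse hasFDerivAt_mul_self_one hω).eventually (by simp)
    rwa [mul_one] at h
  have hright : ∀ᶠ Z in 𝓝 1, g Z * g Z = Z := by
    have h := hst.eventually_right_inverse
    rwa [mul_one] at h
  -- `(g Z)ᵀ` is another square root of `Z` near `1`, so local injectivity of squaring forces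
  -- `(g Z)ᵀ = g Z`
  have hleft : ∀ᶠ Y in 𝓝 (1 : Matrix ι ι ℝ), g (Yᵀ * Yᵀ) = Yᵀ :=
    (continuous_id.matrix_transpose.tendsto' 1 1 transpose_one).eventually
      hst.eventually_left_inverse
  have hgleft : ∀ᶠ Z in 𝓝 1, g ((g Z)ᵀ * (g Z)ᵀ) = (g Z)ᵀ := by
    have hc : ContinuousAt g 1 := by
      have h := hst.localInverse_continuousAt
      rwa [mul_one] at h
    exact hc.eventually (hg1 ▸ hleft)
  have hunit : ∀ᶠ Z in 𝓝 (1 : Matrix ι ι ℝ), IsUnit Z.det := by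
    filter_upwards [continuous_id.matrix_det.continuousAt.eventually_ne
      (by simp : (1 : Matrix ι ι ℝ).det ≠ 0)] with Z hZ
    exact isUnit_iff_ne_zero.2 hZ
  refine ⟨g, _, hsmooth.and (hright.and (hgleft.and hunit)), ?_⟩
  rintro Z ⟨hZs, hZr, hZl, hZu⟩
  refine ⟨hZs, hZr, isUnit_of_mul_isUnit_left (by rwa [← det_mul, hZr]), fun hZ => ?_⟩
  have : (g Z)ᵀ * (g Z)ᵀ = Z := by rw [← transpose_mul, hZr, hZ.eq]
  rw [IsSymm, ← hZl, this]

theorem ContDiffOn.exists_sqrt_nhdsWithin {E : Type*} [NormedAddCommGroup E] [NormedSpace ℝ E]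
    {k : WithTop ℕ∞} {T : Set E} {G : E → Matrix ι ι ℝ} (hG : ContDiffOn ℝ k G T) {θ₀ : E}
    (hθ₀ : θ₀ ∈ T) (hG₀ : G θ₀ = 1) :
    ∃ U ∈ 𝓝[T] θ₀, U ⊆ T ∧ ∃ C : E → Matrix ι ι ℝ, ContDiffOn ℝ k C U ∧ ∀ θ ∈ U,
      C θ * C θ = G θ ∧ IsUnit (C θ).det ∧ ((G θ).IsSymm → (C θ).IsSymm) := by
  obtain ⟨g, V, hV, hg⟩ := exists_sqrt_nhds_one (ι := ι)
  refine ⟨{θ ∈ T | G θ ∈ V}, inter_mem self_mem_nhdsWithin (hG.continuousOn θ₀ hθ₀ (hG₀ ▸ hV)),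
    fun _ h => h.1, fun θ => g (G θ), fun θ hθ => ?_, fun θ hθ => (hg _ hθ.2).2⟩
  exact ((hg _ hθ.2).1.of_le le_top).comp_contDiffWithinAt θ (hG.mono (fun _ h => h.1) θ hθ)

end Sqrt

section BlockAlgebra

theorem Matrix.toBlocks₂₂_eq_of_rank_le {l n n' K : Type*} [Fintype l] [DecidableEq l]
    [Fintype n'] [Field K] {Q : Matrix (l ⊕ n) (l ⊕ n') K} (ha : IsUnit Q.toBlocks₁₁.det)
    (hQ : Q.rank ≤ Fintype.card l) :
    Q.toBlocks₂₂ = Q.toBlocks₂₁ * Q.toBlocks₁₁⁻¹ * Q.toBlocks₁₂ := by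
  let _ := invertibleOfIsUnitDet _ ha
  ext i j
  by_contra hij
  -- a nonzero entry of the Schur complement gives an invertible bordered minor of size `|l| + 1`
  set Q' := Q.submatrix (Sum.map id fun _ : Unit => i) (Sum.map id fun _ : Unit => j)
  have hdet : Q'.det ≠ 0 := by
    rw [← fromBlocks_toBlocks Q']
    have : Invertible Q'.toBlocks₁₁ := ‹Invertible Q.toBlocks₁₁›
    rw [det_fromBlocks₁₁, det_unique (_ : Matrix Unit Unit K), invOf_eq_nonsing_inv]
    exact mul_ne_zero ha.ne_zero (sub_ne_zero.2 hij)
  have hQ' : Q'.rank = Fintype.card l + 1 := by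
    rw [rank_of_isUnit Q' ((isUnit_iff_isUnit_det _).2 (isUnit_iff_ne_zero.2 hdet)),
      Fintype.card_sum, Fintype.card_unit]
  have : Q'.rank ≤ Q.rank := rank_submatrix_le Q _ _
  omega

theorem Matrix.IsSymm.eq_fromBlocks_of_rank_le {l n K : Type*} [Fintype l] [DecidableEq l]
    [Fintype n] [Field K] {Q : Matrix (l ⊕ n) (l ⊕ n) K} (hQ : Q.IsSymm)
    (ha : IsUnit Q.toBlocks₁₁.det) (hr : Q.rank ≤ Fintype.card l) {X : Matrix n l K}
    (hX : X * Q.toBlocks₁₁ = Q.toBlocks₂₁) :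
    Q = Matrix.fromBlocks Q.toBlocks₁₁ (Q.toBlocks₁₁ * Xᵀ) (X * Q.toBlocks₁₁)
      (X * Q.toBlocks₁₁ * Xᵀ) := by
  have hd := toBlocks₂₂_eq_of_rank_le ha hr
  rw [← fromBlocks_toBlocks Q, isSymm_fromBlocks_iff] at hQ
  obtain ⟨ha', -, hc, -⟩ := hQ
  have hb : Q.toBlocks₁₂ = Q.toBlocks₁₁ * Xᵀ := by rw [← hc, ← hX, transpose_mul, ha']
  conv_lhs => rw [← fromBlocks_toBlocks Q, hd, hb, ← hX, Matrix.mul_assoc X,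
    mul_nonsing_inv _ ha, Matrix.mul_one, ← Matrix.mul_assoc]

variable {l n R : Type*} [Fintype l] [Fintype n] [DecidableEq l] [DecidableEq n] [CommRing R]

/-- When `C` and `D` are symmetric square roots of `1 + Xᵀ * X` and `1 + X * Xᵀ`, this is an
orthogonal matrix whose first columns span the graph of `X`. -/
noncomputable def graphFrame (X : Matrix n l R) (C : Matrix l l R) (D : Matrix n n R) :
    Matrix (l ⊕ n) (l ⊕ n) R :=
  fromBlocks C⁻¹ (-(Xᵀ * D⁻¹)) (X * C⁻¹) D⁻¹

theorem graphFrame_transpose_mul_self {X : Matrix n l R} {C : Matrix l l R} {D : Matrix n n R}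
    (hCs : C.IsSymm) (hDs : D.IsSymm) (hCu : IsUnit C.det) (hDu : IsUnit D.det)
    (hC : C * C = 1 + Xᵀ * X) (hD : D * D = 1 + X * Xᵀ) :
    (graphFrame X C D)ᵀ * graphFrame X C D = 1 := by
  have hCi : (C⁻¹)ᵀ = C⁻¹ := by rw [transpose_nonsing_inv, hCs.eq]
  have hDi : (D⁻¹)ᵀ = D⁻¹ := by rw [transpose_nonsing_inv, hDs.eq]
  rw [graphFrame, fromBlocks_transpose, fromBlocks_multiply, ← fromBlocks_one]
  simp only [transpose_mul, transpose_neg, transpose_transpose, hCi, hDi, Matrix.neg_mul,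
    Matrix.mul_neg, neg_neg, Matrix.mul_assoc, neg_add_cancel]
  congr 1
  · calc C⁻¹ * C⁻¹ + C⁻¹ * (Xᵀ * (X * C⁻¹)) = C⁻¹ * (C * C) * C⁻¹ := by
          rw [hC, Matrix.mul_add, Matrix.add_mul, Matrix.mul_one, Matrix.mul_assoc,
            Matrix.mul_assoc]
      _ = 1 := by rw [← Matrix.mul_assoc, nonsing_inv_mul _ hCu, Matrix.one_mul,
          mul_nonsing_inv _ hCu]
  · calc D⁻¹ * (X * (Xᵀ * D⁻¹)) + D⁻¹ * D⁻¹ = D⁻¹ * (D * D) * D⁻¹ := by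
          rw [hD, Matrix.mul_add, Matrix.add_mul, Matrix.mul_one, Matrix.mul_assoc,
            Matrix.mul_assoc, add_comm]
      _ = 1 := by rw [← Matrix.mul_assoc, nonsing_inv_mul _ hDu, Matrix.one_mul,
          mul_nonsing_inv _ hDu]

theorem fromBlocks_graph_eq_graphFrame_mul {a : Matrix l l R} {X : Matrix n l R}
    {C : Matrix l l R} (D : Matrix n n R) (hCs : C.IsSymm) (hCu : IsUnit C.det) :
    fromBlocks a (a * Xᵀ) (X * a) (X * a * Xᵀ) =
      graphFrame X C D * fromBlocks (C * a * C) 0 0 0 * (graphFrame X C D)ᵀ := by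
  have hCi : (C⁻¹)ᵀ = C⁻¹ := by rw [transpose_nonsing_inv, hCs.eq]
  rw [graphFrame, fromBlocks_transpose, fromBlocks_multiply, fromBlocks_multiply]
  simp only [Matrix.mul_zero, Matrix.zero_mul, add_zero, transpose_mul, hCi, ← Matrix.mul_assoc,
    nonsing_inv_mul _ hCu, Matrix.one_mul, nonsing_inv_mul_cancel_right _ _ hCu,
    mul_nonsing_inv_cancel_right _ _ hCu]

theorem Matrix.IsSymm.eq_graphFrame_mul_fromBlocks {K : Type*} [Field K]
    {Q : Matrix (l ⊕ n) (l ⊕ n) K} (hQ : Q.IsSymm) (ha : IsUnit Q.toBlocks₁₁.det)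
    (hr : Q.rank ≤ Fintype.card l) {C : Matrix l l K} (D : Matrix n n K) (hCs : C.IsSymm)
    (hCu : IsUnit C.det) :
    Q = graphFrame (Q.toBlocks₂₁ * Q.toBlocks₁₁⁻¹) C D *
      Matrix.fromBlocks (C * Q.toBlocks₁₁ * C) 0 0 0 *
        (graphFrame (Q.toBlocks₂₁ * Q.toBlocks₁₁⁻¹) C D)ᵀ :=
  (hQ.eq_fromBlocks_of_rank_le ha hr (nonsing_inv_mul_cancel_right _ _ ha)).trans
    (fromBlocks_graph_eq_graphFrame_mul D hCs hCu)

end BlockAlgebra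

section Spectral

theorem Matrix.submatrix_mul_reindex_mul_transpose {ι κ ι' R : Type*} [Fintype κ] [Fintype ι']
    [CommSemiring R] (M : Matrix ι κ R) (e : κ ≃ ι') (Z : Matrix κ κ R) :
    M.submatrix id e.symm * reindex e e Z * (M.submatrix id e.symm)ᵀ = M * Z * Mᵀ := by
  rw [reindex_apply, transpose_submatrix, submatrix_mul_equiv, submatrix_mul_equiv,
    submatrix_id_id]

variable {ι l n : Type*} [Fintype ι] [DecidableEq ι] [Fintype l] [Fintype n] [DecidableEq l]
  [DecidableEq n]

theorem Matrix.spectrum_subset_spectrum_conj_reindex_fromBlocks {K : Type*} [Field K]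
    {M : Matrix ι ι K} (hM : M * Mᵀ = 1) (e : l ⊕ n ≃ ι) (B : Matrix l l K) :
    spectrum K B ⊆ spectrum K (M * reindex e e (fromBlocks B 0 0 0) * Mᵀ) := by
  intro μ hμ
  rw [mem_spectrum_iff_isRoot_charpoly] at hμ ⊢
  rw [charpoly_mul_comm, ← Matrix.mul_assoc, mul_eq_one_comm.1 hM, Matrix.one_mul,
    charpoly_reindex, charpoly_fromBlocks_zero₁₂]
  exact Polynomial.root_mul_right_of_isRoot _ hμ

theorem Matrix.IsHermitian.exists_conj_eq_fromBlocks {A : Matrix ι ι ℝ} (hA : A.IsHermitian)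
    (hrank : A.rank = Fintype.card l) (hcard : Fintype.card l + Fintype.card n = Fintype.card ι) :
    ∃ V : Matrix ι (l ⊕ n) ℝ, V * Vᵀ = 1 ∧
      ∃ a : Matrix l l ℝ, IsUnit a.det ∧ Vᵀ * A * V = Matrix.fromBlocks a 0 0 0 := by
  set U : Matrix ι ι ℝ := ↑hA.eigenvectorUnitary
  have hUU : U * Uᵀ = 1 := by
    simpa [star_eq_conjTranspose] using (mem_unitaryGroup_iff.1 hA.eigenvectorUnitary.2)
  have hdiag : Uᵀ * A * U = diagonal hA.eigenvalues := by
    simpa [U, star_eq_conjTranspose] using hA.conjStarAlgAut_star_eigenvectorUnitary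
  have hl : Fintype.card {i // hA.eigenvalues i ≠ 0} = Fintype.card l :=
    hA.rank_eq_card_non_zero_eigs.symm.trans hrank
  have hn : Fintype.card {i // ¬hA.eigenvalues i ≠ 0} = Fintype.card n := by
    rw [Fintype.card_subtype_compl, hl]; omega
  -- order the eigenbasis so that the nonzero eigenvalues come first
  let π : l ⊕ n ≃ ι := (Equiv.sumCongr (Fintype.equivOfCardEq hl).symm
    (Fintype.equivOfCardEq hn).symm).trans (Equiv.sumCompl _)
  refine ⟨U.submatrix id π, ?_, diagonal fun i => hA.eigenvalues (π (.inl i)), ?_, ?_⟩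
  · rw [transpose_submatrix, ← submatrix_mul _ _ _ _ _ π.bijective, hUU, submatrix_id_id]
  · rw [det_diagonal, isUnit_iff_ne_zero, Finset.prod_ne_zero_iff]
    exact fun i _ => by simpa [π] using ((Fintype.equivOfCardEq hl).symm i).2
  · have h : Uᵀ.submatrix π id * A * U.submatrix id π = (Uᵀ * A * U).submatrix π π := by
      rw [submatrix_mul _ _ _ id _ Function.bijective_id,
        submatrix_mul _ _ _ id _ Function.bijective_id, submatrix_id_id]
    rw [transpose_submatrix, h, hdiag, submatrix_diagonal_equiv, ← diagonal_zero,
      fromBlocks_diagonal]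
    congr 1
    ext (i | j)
    · rfl
    · simpa [π] using ((Fintype.equivOfCardEq hn).symm j).2

end Spectral

section LocalDecomposition

variable {E : Type*} [NormedAddCommGroup E] [NormedSpace ℝ E] {k : WithTop ℕ∞} {S : Set E}
  {l n : Type*} [Fintype l] [Fintype n] [DecidableEq l] [DecidableEq n]

theorem ContDiffOn.graphFrame {X : E → Matrix n l ℝ} {C : E → Matrix l l ℝ}
    {D : E → Matrix n n ℝ} (hX : ContDiffOn ℝ k X S) (hC : ContDiffOn ℝ k C S)
    (hD : ContDiffOn ℝ k D S) (hCu : ∀ θ ∈ S, IsUnit (C θ).det)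
    (hDu : ∀ θ ∈ S, IsUnit (D θ).det) :
    ContDiffOn ℝ k (fun θ => graphFrame (X θ) (C θ) (D θ)) S :=
  (hC.matrix_inv hCu).matrix_fromBlocks (hX.matrix_transpose.matrix_mul (hD.matrix_inv hDu)).neg
    (hX.matrix_mul (hC.matrix_inv hCu)) (hD.matrix_inv hDu)

theorem exists_smooth_graphFrame_decomposition {Q : E → Matrix (l ⊕ n) (l ⊕ n) ℝ}
    (hQ : ContDiffOn ℝ k Q S) (hsymm : ∀ θ ∈ S, (Q θ).IsSymm)
    (hrank : ∀ θ ∈ S, (Q θ).rank ≤ Fintype.card l) {θ₀ : E} (hθ₀ : θ₀ ∈ S)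
    (ha₀ : IsUnit (Q θ₀).toBlocks₁₁.det) (hb₀ : (Q θ₀).toBlocks₂₁ = 0) :
    ∃ U ∈ 𝓝[S] θ₀, ∃ (F : E → Matrix (l ⊕ n) (l ⊕ n) ℝ) (B : E → Matrix l l ℝ),
      ContDiffOn ℝ k F U ∧ ContDiffOn ℝ k B U ∧ ∀ θ ∈ U,
        F θ * (F θ)ᵀ = 1 ∧ (B θ).IsSymm ∧ IsUnit (B θ).det ∧
          Q θ = F θ * fromBlocks (B θ) 0 0 0 * (F θ)ᵀ := by
  set a := fun θ => (Q θ).toBlocks₁₁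
  set X := fun θ => (Q θ).toBlocks₂₁ * (a θ)⁻¹
  have ha : ContDiffOn ℝ k a S := hQ.matrix_submatrix _ _
  set T := {θ ∈ S | IsUnit (a θ).det}
  have hT : T ∈ 𝓝[S] θ₀ := inter_mem self_mem_nhdsWithin <|
    ((ha.matrix_det.continuousOn θ₀ hθ₀).eventually (isOpen_ne.eventually_mem ha₀.ne_zero)).mono
      fun _ h => isUnit_iff_ne_zero.2 h
  have hX : ContDiffOn ℝ k X T :=
    (hQ.mono fun _ h => h.1).matrix_submatrix _ _ |>.matrix_mul
      ((ha.mono fun _ h => h.1).matrix_inv fun _ h => h.2)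
  have hX₀ : X θ₀ = 0 := by simp [X, hb₀]
  obtain ⟨UC, hUC, hUCT, C, hC, hCprop⟩ :=
    ((contDiffOn_const (c := 1)).add (hX.matrix_transpose.matrix_mul hX)).exists_sqrt_nhdsWithin
      ⟨hθ₀, ha₀⟩
      (by simp [hX₀])
  obtain ⟨UD, hUD, hUDT, D, hD, hDprop⟩ :=
    ((contDiffOn_const (c := 1)).add (hX.matrix_mul hX.matrix_transpose)).exists_sqrt_nhdsWithin
      ⟨hθ₀, ha₀⟩
      (by simp [hX₀])
  refine ⟨UC ∩ UD, inter_mem (nhdsWithin_le_of_mem hT hUC) (nhdsWithin_le_of_mem hT hUD),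
    fun θ => graphFrame (X θ) (C θ) (D θ), fun θ => C θ * a θ * C θ,
    (hX.mono (inter_subset_left.trans hUCT)).graphFrame (hC.mono inter_subset_left)
      (hD.mono inter_subset_right) (fun θ hθ => (hCprop θ hθ.1).2.1)
      (fun θ hθ => (hDprop θ hθ.2).2.1),
    ((hC.mono inter_subset_left).matrix_mul (ha.mono fun _ h => (hUCT h.1).1)).matrix_mul
      (hC.mono inter_subset_left), fun θ ⟨hθC, hθD⟩ => ?_⟩
  obtain ⟨hθS, haθ⟩ := hUCT hθC
  obtain ⟨hCsq, hCu, hCs⟩ := hCprop θ hθC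
  obtain ⟨hDsq, hDu, hDs⟩ := hDprop θ hθD
  replace hCs := hCs (by simp [IsSymm, transpose_mul])
  replace hDs := hDs (by simp [IsSymm, transpose_mul])
  have has : (a θ).IsSymm := (hsymm θ hθS).submatrix Sum.inl
  refine ⟨mul_eq_one_comm.1 (graphFrame_transpose_mul_self hCs hDs hCu hDu hCsq hDsq), ?_,
    by simpa only [det_mul] using (hCu.mul haθ).mul hCu,
    (hsymm θ hθS).eq_graphFrame_mul_fromBlocks haθ (hrank θ hθS) _ hCs hCu⟩
  change (C θ * a θ * C θ)ᵀ = C θ * a θ * C θ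
  rw [transpose_mul, transpose_mul, hCs.eq, has.eq, Matrix.mul_assoc]

end LocalDecomposition

section BlockDecomposition

variable {E : Type*} [NormedAddCommGroup E] [NormedSpace ℝ E] {k : WithTop ℕ∞}
  {ι l n : Type*} [Fintype ι] [DecidableEq ι] [Fintype l] [DecidableEq l]

def HasSmoothBlockDecompOn (k : WithTop ℕ∞) (e : l ⊕ n ≃ ι) (A : E → Matrix ι ι ℝ)
    (T : Set E) : Prop :=
  ∃ (M : E → Matrix ι ι ℝ) (B : E → Matrix l l ℝ), ContDiffOn ℝ k M T ∧ ContDiffOn ℝ k B T ∧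
    ∀ θ ∈ T, M θ * (M θ)ᵀ = 1 ∧ (B θ).IsSymm ∧ IsUnit (B θ).det ∧
      A θ = M θ * reindex e e (fromBlocks (B θ) 0 0 0) * (M θ)ᵀ

theorem HasSmoothBlockDecompOn.mono {e : l ⊕ n ≃ ι} {A : E → Matrix ι ι ℝ} {T T' : Set E}
    (h : HasSmoothBlockDecompOn k e A T) (hT : T' ⊆ T) : HasSmoothBlockDecompOn k e A T' :=
  let ⟨M, B, hM, hB, hMB⟩ := h
  ⟨M, B, hM.mono hT, hB.mono hT, fun θ hθ => hMB θ (hT hθ)⟩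

theorem exists_hasSmoothBlockDecompOn_nhdsWithin [Fintype n] [DecidableEq n] {S : Set E}
    {A : E → Matrix ι ι ℝ} (hA : ContDiffOn ℝ k A S) (hherm : ∀ θ ∈ S, (A θ).IsHermitian)
    (hrank : ∀ θ ∈ S, (A θ).rank = Fintype.card l) (e : l ⊕ n ≃ ι) {θ₀ : E} (hθ₀ : θ₀ ∈ S) :
    ∃ U ∈ 𝓝[S] θ₀, HasSmoothBlockDecompOn k e A U := by
  obtain ⟨V, hVV, a₀, ha₀, hV₀⟩ :=
    (hherm θ₀ hθ₀).exists_conj_eq_fromBlocks (n := n) (hrank θ₀ hθ₀)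
      (by rw [← Fintype.card_sum, Fintype.card_congr e])
  obtain ⟨U, hU, F, B, hF, hB, hFB⟩ := exists_smooth_graphFrame_decomposition
    (Q := fun θ => Vᵀ * A θ * V)
    ((contDiffOn_const.matrix_mul hA).matrix_mul contDiffOn_const)
    (fun θ hθ => by
      rw [IsSymm, transpose_mul, transpose_mul, transpose_transpose,
        (isHermitian_iff_isSymm.1 (hherm θ hθ)).eq, Matrix.mul_assoc])
    (fun θ hθ => ((rank_mul_le_left _ _).trans (rank_mul_le_right _ _)).trans (hrank θ hθ).le)
    hθ₀ (by rwa [hV₀, toBlocks_fromBlocks₁₁]) (by rw [hV₀, toBlocks_fromBlocks₂₁])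
  refine ⟨U, hU, fun θ => (V * F θ).submatrix id e.symm, B,
    (contDiffOn_const.matrix_mul hF).matrix_submatrix _ _, hB, fun θ hθ => ?_⟩
  obtain ⟨hFF, hBs, hBu, hQ⟩ := hFB θ hθ
  refine ⟨?_, hBs, hBu, ?_⟩
  · rw [transpose_submatrix, submatrix_mul_equiv, submatrix_id_id, transpose_mul,
      Matrix.mul_assoc, ← Matrix.mul_assoc (F θ), hFF, Matrix.one_mul, hVV]
  · rw [submatrix_mul_reindex_mul_transpose]
    calc A θ = V * Vᵀ * A θ * (V * Vᵀ) := by rw [hVV, Matrix.one_mul, Matrix.mul_one]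
      _ = V * (Vᵀ * A θ * V) * Vᵀ := by simp only [Matrix.mul_assoc]
      _ = _ := by rw [hQ, transpose_mul]; simp only [Matrix.mul_assoc]

end BlockDecomposition

theorem IsCompact.exists_forall_inter_closedBall {X : Type*} [PseudoMetricSpace X] {K : Set X}
    (hK : IsCompact K) {P : Set X → Prop} (hP : ∀ ⦃s t⦄, s ⊆ t → P t → P s)
    (hloc : ∀ x ∈ K, ∃ U ∈ 𝓝[K] x, P U) : ∃ δ > 0, ∀ x ∈ K, P (K ∩ closedBall x δ) := by
  choose! U hU hPU using hloc
  choose! ε hε hεU using fun x hx => Metric.mem_nhdsWithin_iff.1 (hU x hx)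
  obtain ⟨δ, hδ, hcov⟩ := lebesgue_number_lemma_of_metric (c := fun y : K => ball (y : X) (ε y))
    hK (fun _ => isOpen_ball) fun x hx => mem_iUnion.2 ⟨⟨x, hx⟩, mem_ball_self (hε x hx)⟩
  refine ⟨δ / 2, half_pos hδ, fun x hx => ?_⟩
  obtain ⟨y, hy⟩ := hcov x hx
  exact hP (fun z hz => hεU y y.2 ⟨hy (closedBall_subset_ball (half_lt_self hδ) hz.2), hz.1⟩)
    (hPU y y.2)

theorem matrix_local_block_decomposition_of_constant_rank_general
    {p d r m : ℕ} (s : ℕ) (hm : r + m = d)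
    (Θ : Set (EuclideanSpace ℝ (Fin p)))
    (hcomp : IsCompact Θ)
    (A : EuclideanSpace ℝ (Fin p) → Matrix (Fin d) (Fin d) ℝ)
    (hA : ContDiffOn ℝ (s : ℕ∞) A Θ)
    (hpsd : ∀ θ ∈ Θ, (A θ).PosSemidef)
    (hrank : ∀ θ ∈ Θ, (A θ).rank = r)
    (lam llam : ℝ) (hlam : 0 < lam) (hll : lam ≤ llam)
    (heig : ∀ θ ∈ Θ, ∀ μ ∈ spectrum ℝ (A θ), μ ≠ 0 → lam ≤ μ ∧ μ ≤ llam) :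
    ∃ δ > (0 : ℝ), ∀ θ₀ ∈ Θ,
      ∃ (M : EuclideanSpace ℝ (Fin p) → Matrix (Fin d) (Fin d) ℝ)
        (B : EuclideanSpace ℝ (Fin p) → Matrix (Fin r) (Fin r) ℝ)
        (lamB llamB : ℝ),
        0 < lamB ∧ lamB ≤ llamB ∧
        ContDiffOn ℝ (s : ℕ∞) M {θ ∈ Θ | ‖θ - θ₀‖ ≤ δ} ∧
        ContDiffOn ℝ (s : ℕ∞) B {θ ∈ Θ | ‖θ - θ₀‖ ≤ δ} ∧
        ∀ θ ∈ {θ ∈ Θ | ‖θ - θ₀‖ ≤ δ},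
          M θ * (M θ)ᵀ = (1 : Matrix (Fin d) (Fin d) ℝ) ∧
          (B θ).IsSymm ∧
          (∀ μ ∈ spectrum ℝ (B θ), lamB ≤ μ ∧ μ ≤ llamB) ∧
          A θ = M θ *
            (Matrix.reindex (finSumFinEquiv.trans (finCongr hm))
              (finSumFinEquiv.trans (finCongr hm))
              (Matrix.fromBlocks (B θ) 0 0 (0 : Matrix (Fin m) (Fin m) ℝ))) * (M θ)ᵀ := by
  obtain ⟨δ, hδ, hdec⟩ := hcomp.exists_forall_inter_closedBall (fun _ _ => flip .mono)
    fun θ₀ hθ₀ => exists_hasSmoothBlockDecompOn_nhdsWithin hA (fun θ hθ => (hpsd θ hθ).1)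
      (fun θ hθ => (hrank θ hθ).trans (Fintype.card_fin r).symm)
      (finSumFinEquiv.trans (finCongr hm)) hθ₀
  refine ⟨δ, hδ, fun θ₀ hθ₀ => ?_⟩
  obtain ⟨M, B, hM, hB, hMB⟩ := hdec θ₀ hθ₀
  have hball : {θ ∈ Θ | ‖θ - θ₀‖ ≤ δ} = Θ ∩ closedBall θ₀ δ := by
    ext; simp [dist_eq_norm]
  rw [hball]
  refine ⟨M, B, lam, llam, hlam, hll, hM, hB, fun θ hθ => ?_⟩
  obtain ⟨hMM, hBs, hBu, hAθ⟩ := hMB θ hθ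
  refine ⟨hMM, hBs, fun μ hμ => heig θ hθ.1 μ ?_ ?_, hAθ⟩
  · exact hAθ ▸ spectrum_subset_spectrum_conj_reindex_fromBlocks hMM _ _ hμ
  · rintro rfl
    exact (spectrum.zero_notMem_iff ℝ).2 ((isUnit_iff_isUnit_det _).2 hBu) hμ

/-- **Local smooth block decomposition of a constant-rank positive semidefinite matrix map.**
If `A` is `s`-times continuously differentiable on a convex compact `Θ ⊆ ℝ^p`, positive
semidefinite valued with constant rank `r` (`1 ≤ r ≤ d`, `m = d - r` so `r + m = d`), and all
nonzero eigenvalues of `A θ` lie in `[lam, llam]` with `0 < lam ≤ llam`, then there is a `δ > 0`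
such that around every `θ₀ ∈ Θ` there are `s`-times continuously differentiable maps `M` (d×d,
orthogonal) and `B` (r×r, symmetric with eigenvalues in `[lamB, llamB]`, `0 < lamB ≤ llamB`)
with `A θ = M θ * blockdiag[B θ, 0] * (M θ)ᵀ`. -/
theorem matrix_local_block_decomposition_of_constant_rank
    {p d r m : ℕ} (s : ℕ) (hs : 1 ≤ s) (hm : r + m = d)
    (Θ : Set (EuclideanSpace ℝ (Fin p)))
    (hconv : Convex ℝ Θ) (hcomp : IsCompact Θ)
    (A : EuclideanSpace ℝ (Fin p) → Matrix (Fin d) (Fin d) ℝ)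
    (hA : ContDiffOn ℝ (s : ℕ∞) A Θ)
    (hpsd : ∀ θ ∈ Θ, (A θ).PosSemidef)
    (hr : 1 ≤ r) (hrd : r ≤ d)
    (hrank : ∀ θ ∈ Θ, (A θ).rank = r)
    (lam llam : ℝ) (hlam : 0 < lam) (hll : lam ≤ llam)
    (heig : ∀ θ ∈ Θ, ∀ μ ∈ spectrum ℝ (A θ), μ ≠ 0 → lam ≤ μ ∧ μ ≤ llam) :
    ∃ δ > (0 : ℝ), ∀ θ₀ ∈ Θ,
      ∃ (M : EuclideanSpace ℝ (Fin p) → Matrix (Fin d) (Fin d) ℝ)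
        (B : EuclideanSpace ℝ (Fin p) → Matrix (Fin r) (Fin r) ℝ)
        (lamB llamB : ℝ),
        0 < lamB ∧ lamB ≤ llamB ∧
        ContDiffOn ℝ (s : ℕ∞) M {θ ∈ Θ | ‖θ - θ₀‖ ≤ δ} ∧
        ContDiffOn ℝ (s : ℕ∞) B {θ ∈ Θ | ‖θ - θ₀‖ ≤ δ} ∧
        ∀ θ ∈ {θ ∈ Θ | ‖θ - θ₀‖ ≤ δ},
          M θ * (M θ)ᵀ = (1 : Matrix (Fin d) (Fin d) ℝ) ∧
          (B θ).IsSymm ∧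
          (∀ μ ∈ spectrum ℝ (B θ), lamB ≤ μ ∧ μ ≤ llamB) ∧
          A θ = M θ *
            (Matrix.reindex (finSumFinEquiv.trans (finCongr hm))
              (finSumFinEquiv.trans (finCongr hm))
              (Matrix.fromBlocks (B θ) 0 0 (0 : Matrix (Fin m) (Fin m) ℝ))) * (M θ)ᵀ :=
  matrix_local_block_decomposition_of_constant_rank_general s hm Θ hcomp A hA hpsd hrank lam llam
    hlam hll heig
end

section
/- Let Θ ⊂ ℝ^p be compact and let A, C, K be continuous maps from Θ to real matrices of sizes d×m, m×m, and m×d respectively. Suppose that for every θ ∈ Θ and every complex z with |z| ≤ 1, det(I_m − z·C(θ)) ≠ 0 (the determinant taken of the complex matrix obtained from the real matrix C(θ)). Then there exist M ≥ 0 and ρ ∈ [0,1) such that for every θ ∈ Θ and every j ∈ ℕ, ‖A(θ)·C(θ)^j·K(θ)‖_op ≤ M·ρ^j; in particular, the series ∑_{j=0}^∞ sup_{θ∈Θ} ‖A(θ)·C(θ)^j·K(θ)‖_op converges. -/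
/-!
The determinant condition puts the complex spectrum of every `C θ` inside the open unit disc.
By Gelfand's formula each `C θ` then has a power with `‖C θ ^ N‖ < ρ ^ N` for some `ρ < 1`;
this strict inequality persists for nearby parameters, and splitting `j` into multiples of `N`
plus a remainder turns it into a geometric bound `‖C θ' ^ j‖ ≤ M ρ ^ j` on a neighbourhood.
Compactness patches finitely many such local bounds together, the real operator norm is
dominated by the complex one, and `A`, `K` are bounded on `Θ`.
-/

/-- The operator (spectral) norm of a real matrix, i.e. the operator norm of the induced
linear map between Euclidean spaces. -/
noncomputable def opNorm {m n : ℕ} (A : Matrix (Fin m) (Fin n) ℝ) : ℝ :=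
  ‖LinearMap.toContinuousLinearMap (Matrix.toEuclideanLin A)‖

open Filter Finset

def HasUniformGeometricBound {X : Type*} (u : X → ℕ → ℝ) (T : Set X) : Prop :=
  ∃ M ρ : ℝ, 0 ≤ M ∧ 0 ≤ ρ ∧ ρ < 1 ∧ ∀ x ∈ T, ∀ j, u x j ≤ M * ρ ^ j

namespace HasUniformGeometricBound

variable {X : Type*} {u v : X → ℕ → ℝ} {S T : Set X}

lemma empty : HasUniformGeometricBound u ∅ :=
  ⟨0, 0, le_rfl, le_rfl, zero_lt_one, by simp⟩

lemma mono (h : HasUniformGeometricBound u T) (hST : S ⊆ T) : HasUniformGeometricBound u S :=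
  let ⟨M, ρ, hM, hρ0, hρ1, hu⟩ := h
  ⟨M, ρ, hM, hρ0, hρ1, fun x hx => hu x (hST hx)⟩

lemma union (hS : HasUniformGeometricBound u S) (hT : HasUniformGeometricBound u T) :
    HasUniformGeometricBound u (S ∪ T) := by
  obtain ⟨M, ρ, hM, hρ0, hρ1, hS⟩ := hS
  obtain ⟨M', ρ', hM', hρ0', hρ1', hT⟩ := hT
  refine ⟨max M M', max ρ ρ', le_max_of_le_left hM, le_max_of_le_left hρ0, max_lt hρ1 hρ1', ?_⟩
  rintro x (hx | hx) j
  · exact (hS x hx j).trans (by gcongr <;> simp)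
  · exact (hT x hx j).trans (by gcongr <;> simp)

lemma of_le_mul (h : HasUniformGeometricBound u T) {c : ℝ} (hc : 0 ≤ c)
    (hvu : ∀ x ∈ T, ∀ j, v x j ≤ c * u x j) : HasUniformGeometricBound v T := by
  obtain ⟨M, ρ, hM, hρ0, hρ1, hu⟩ := h
  refine ⟨c * M, ρ, by positivity, hρ0, hρ1, fun x hx j => ?_⟩
  calc v x j ≤ c * u x j := hvu x hx j
    _ ≤ c * (M * ρ ^ j) := by gcongr; exact hu x hx j
    _ = c * M * ρ ^ j := by ring

lemma summable_iSup (h : HasUniformGeometricBound u T) (hu : ∀ x ∈ T, ∀ j, 0 ≤ u x j) :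
    Summable fun j => ⨆ x ∈ T, u x j := by
  obtain ⟨M, ρ, hM, hρ0, hρ1, hle⟩ := h
  refine .of_nonneg_of_le (fun j => Real.iSup_nonneg fun x => Real.iSup_nonneg fun hx => hu x hx j)
    (fun j => Real.iSup_le (fun x => Real.iSup_le (fun hx => hle x hx j) (by positivity))
      (by positivity)) ((summable_geometric_of_lt_one hρ0 hρ1).mul_left M)

end HasUniformGeometricBound

section NormedRing

variable {𝓐 : Type*} [NormedRing 𝓐]

lemma norm_pow_le_of_norm_pow_le {a : 𝓐} {N : ℕ} (hN : 0 < N) {ρ : ℝ} (hρ : 0 < ρ)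
    (ha : ‖a ^ N‖ ≤ ρ ^ N) (j : ℕ) : ‖a ^ j‖ ≤ (∑ s ∈ range N, ‖a ^ s‖ / ρ ^ s) * ρ ^ j := by
  induction j using Nat.strong_induction_on with
  | _ j ih =>
    rcases lt_or_ge j N with hj | hj
    · calc ‖a ^ j‖ = ‖a ^ j‖ / ρ ^ j * ρ ^ j := by field_simp
        _ ≤ _ := by
          gcongr
          exact single_le_sum (f := fun s => ‖a ^ s‖ / ρ ^ s) (fun s _ => by positivity)
            (mem_range.2 hj)
    · obtain ⟨i, rfl⟩ := Nat.exists_eq_add_of_le' hj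
      calc ‖a ^ (i + N)‖ ≤ ‖a ^ i‖ * ‖a ^ N‖ := by rw [pow_add]; exact norm_mul_le _ _
        _ ≤ ((∑ s ∈ range N, ‖a ^ s‖ / ρ ^ s) * ρ ^ i) * ρ ^ N := by
          gcongr
          exact ih i (by omega)
        _ = _ := by ring

end NormedRing

lemma spectralRadius_lt_one_of_forall_norm_lt_one {𝕜 𝓐 : Type*} [NontriviallyNormedField 𝕜]
    [ProperSpace 𝕜] [NormedRing 𝓐] [NormedAlgebra 𝕜 𝓐] [CompleteSpace 𝓐] {a : 𝓐}
    (h : ∀ z ∈ spectrum 𝕜 a, ‖z‖ < 1) : spectralRadius 𝕜 a < 1 := by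
  rcases (spectrum 𝕜 a).eq_empty_or_nonempty with he | hne
  · simp [spectralRadius, he]
  · exact mod_cast spectrum.spectralRadius_lt_of_forall_lt_of_nonempty hne (r := 1)
      fun z hz => mod_cast h z hz

section ComplexBanachAlgebra

variable {𝓐 : Type*} [NormedRing 𝓐] [NormedAlgebra ℂ 𝓐] [CompleteSpace 𝓐]

lemma exists_norm_pow_lt_pow_of_spectralRadius_lt_one {a : 𝓐} (ha : spectralRadius ℂ a < 1) :
    ∃ ρ : ℝ, 0 < ρ ∧ ρ < 1 ∧ ∃ N : ℕ, 0 < N ∧ ‖a ^ N‖ < ρ ^ N := by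
  obtain ⟨ρ, -, haρ, hρ1⟩ := ENNReal.lt_iff_exists_real_btwn.1 ha
  have hρ0 : 0 < ρ := ENNReal.ofReal_pos.1 (pos_of_gt haρ)
  obtain ⟨N, hN, hNρ⟩ := ((eventually_gt_atTop 0).and
    ((spectrum.pow_norm_pow_one_div_tendsto_nhds_spectralRadius a).eventually_lt_const haρ)).exists
  refine ⟨ρ, hρ0, ENNReal.ofReal_lt_one.1 hρ1, N, hN, ?_⟩
  rw [ENNReal.ofReal_lt_ofReal_iff hρ0, one_div,
    Real.rpow_inv_lt_iff_of_pos (norm_nonneg _) hρ0.le (by exact_mod_cast hN)] at hNρ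
  exact_mod_cast hNρ

theorem IsCompact.hasUniformGeometricBound_norm_pow {X : Type*} [TopologicalSpace X] {S : Set X}
    (hS : IsCompact S) {f : X → 𝓐} (hf : ContinuousOn f S)
    (hf1 : ∀ x ∈ S, spectralRadius ℂ (f x) < 1) :
    HasUniformGeometricBound (fun x j => ‖f x ^ j‖) S := by
  refine hS.induction_on .empty (fun _ _ hST hT => hT.mono hST) (fun _ _ => .union)
    fun x hx => ?_
  obtain ⟨ρ, hρ0, hρ1, N, hN, hxN⟩ := exists_norm_pow_lt_pow_of_spectralRadius_lt_one (hf1 x hx)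
  set c : 𝓐 → ℝ := fun a => ∑ s ∈ range N, ‖a ^ s‖ / ρ ^ s
  have hc : Continuous c := by fun_prop
  refine ⟨{y | ‖f y ^ N‖ < ρ ^ N ∧ c (f y) < c (f x) + 1}, ?_,
    c (f x) + 1, ρ, by positivity, hρ0.le, hρ1, fun y hy j => ?_⟩
  · exact ((((continuous_pow N).norm.tendsto _).comp (hf x hx)).eventually_lt_const hxN).and
      (((hc.tendsto _).comp (hf x hx)).eventually_lt_const (lt_add_one _))
  · calc ‖f y ^ j‖ ≤ c (f y) * ρ ^ j := norm_pow_le_of_norm_pow_le hN hρ0 hy.1.le j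
      _ ≤ (c (f x) + 1) * ρ ^ j := by gcongr; exact hy.2.le

end ComplexBanachAlgebra

lemma Matrix.norm_lt_one_of_mem_spectrum {𝕜 n : Type*} [NormedField 𝕜] [Fintype n]
    [DecidableEq n] {D : Matrix n n 𝕜} (hD : ∀ z : 𝕜, ‖z‖ ≤ 1 → (1 - z • D).det ≠ 0) {μ : 𝕜}
    (hμ : μ ∈ spectrum 𝕜 D) : ‖μ‖ < 1 := by
  by_contra! hμ1
  have hμ0 : μ ≠ 0 := norm_pos_iff.1 (one_pos.trans_le hμ1)
  refine hD μ⁻¹ (by rw [norm_inv]; exact inv_le_one_of_one_le₀ hμ1) ?_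
  have hsing : (algebraMap 𝕜 (Matrix n n 𝕜) μ - D).det = 0 := by
    rw [spectrum.mem_iff, Matrix.isUnit_iff_isUnit_det, isUnit_iff_ne_zero, not_not] at hμ
    exact hμ
  rw [show (1 : Matrix n n 𝕜) - μ⁻¹ • D = μ⁻¹ • (algebraMap 𝕜 (Matrix n n 𝕜) μ - D) by
    rw [smul_sub, Algebra.algebraMap_eq_smul_one, smul_smul, inv_mul_cancel₀ hμ0, one_smul],
    Matrix.det_smul, hsing, mul_zero]

open scoped Matrix.Norms.L2Operator

lemma Matrix.l2_opNorm_le_l2_opNorm_map_ofReal {m n : Type*} [Fintype m] [Fintype n]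
    [DecidableEq n] (X : Matrix m n ℝ) : ‖X‖ ≤ ‖X.map Complex.ofReal‖ := by
  rw [Matrix.l2_opNorm_def]
  refine ContinuousLinearMap.opNorm_le_bound _ (norm_nonneg _) fun v => ?_
  set vc : EuclideanSpace ℂ n := WithLp.toLp 2 (Complex.ofReal ∘ v)
  have hvc : ‖vc‖ = ‖v‖ := by simp [EuclideanSpace.norm_eq, vc]
  have hbound := Matrix.l2_opNorm_mulVec (X.map Complex.ofReal) vc
  rw [hvc] at hbound
  refine le_of_eq_of_le ?_ hbound
  have hmap (i : m) :
      (X.map Complex.ofReal).mulVec (Complex.ofReal ∘ v.ofLp) i = (X.mulVec v.ofLp i : ℂ) :=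
    (RingHom.map_mulVec Complex.ofRealHom X v i).symm
  simp [EuclideanSpace.norm_eq, vc, hmap]

/-- **Uniform geometric decay of `A(θ) C(θ)^j K(θ)`.**
If `A, C, K` are continuous on a compact `Θ ⊆ ℝ^p` and `det (I - z C(θ)) ≠ 0` for all
`|z| ≤ 1` and `θ ∈ Θ`, then there are `M ≥ 0` and `ρ ∈ [0,1)` with
`‖A(θ) C(θ)^j K(θ)‖_op ≤ M ρ^j` for all `θ ∈ Θ`, `j ∈ ℕ`; in particular
`∑_j sup_{θ ∈ Θ} ‖A(θ) C(θ)^j K(θ)‖_op` converges. -/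
theorem summable_opNorm_of_spectral_radius_lt_one
    {p d m : ℕ} (Θ : Set (EuclideanSpace ℝ (Fin p))) (hcomp : IsCompact Θ)
    (A : EuclideanSpace ℝ (Fin p) → Matrix (Fin d) (Fin m) ℝ)
    (C : EuclideanSpace ℝ (Fin p) → Matrix (Fin m) (Fin m) ℝ)
    (K : EuclideanSpace ℝ (Fin p) → Matrix (Fin m) (Fin d) ℝ)
    (hA : ContinuousOn A Θ) (hC : ContinuousOn C Θ) (hK : ContinuousOn K Θ)
    (hdet : ∀ θ ∈ Θ, ∀ z : ℂ, ‖z‖ ≤ 1 →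
      ((1 : Matrix (Fin m) (Fin m) ℂ) - z • (C θ).map Complex.ofReal).det ≠ 0) :
    ∃ M ρ : ℝ, 0 ≤ M ∧ 0 ≤ ρ ∧ ρ < 1 ∧
      (∀ θ ∈ Θ, ∀ j : ℕ, opNorm (A θ * C θ ^ j * K θ) ≤ M * ρ ^ j) ∧
      Summable (fun j : ℕ => ⨆ θ ∈ Θ, opNorm (A θ * C θ ^ j * K θ)) := by
  -- `opNorm` is definitionally the norm of `Matrix.Norms.L2Operator`.
  have hCℂ : HasUniformGeometricBound (fun θ j => ‖(C θ).map Complex.ofReal ^ j‖) Θ :=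
    hcomp.hasUniformGeometricBound_norm_pow
      ((continuous_id.matrix_map Complex.continuous_ofReal).comp_continuousOn hC)
      fun θ hθ => spectralRadius_lt_one_of_forall_norm_lt_one fun _ =>
        Matrix.norm_lt_one_of_mem_spectrum (hdet θ hθ)
  obtain ⟨a, ha0, ha⟩ := (hcomp.image_of_continuousOn hA).isBounded.exists_pos_norm_le
  obtain ⟨k, hk0, hk⟩ := (hcomp.image_of_continuousOn hK).isBounded.exists_pos_norm_le
  have hACK : HasUniformGeometricBound (fun θ j => opNorm (A θ * C θ ^ j * K θ)) Θ := by
    refine hCℂ.of_le_mul (c := a * k) (by positivity) fun θ hθ j => ?_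
    have hCj : ‖C θ ^ j‖ ≤ ‖(C θ).map Complex.ofReal ^ j‖ :=
      Matrix.map_pow (C θ) Complex.ofRealHom j ▸ Matrix.l2_opNorm_le_l2_opNorm_map_ofReal _
    calc opNorm (A θ * C θ ^ j * K θ) ≤ ‖A θ‖ * ‖C θ ^ j‖ * ‖K θ‖ :=
          (Matrix.l2_opNorm_mul _ _).trans (by gcongr; exact Matrix.l2_opNorm_mul _ _)
      _ ≤ a * ‖(C θ).map Complex.ofReal ^ j‖ * k :=
          mul_le_mul (mul_le_mul (ha _ (Set.mem_image_of_mem A hθ)) hCj (norm_nonneg _) ha0.le)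
            (hk _ (Set.mem_image_of_mem K hθ)) (norm_nonneg _) (by positivity)
      _ = a * k * ‖(C θ).map Complex.ofReal ^ j‖ := by ring
  have hsum := hACK.summable_iSup fun _ _ _ => norm_nonneg _
  obtain ⟨M, ρ, hM, hρ0, hρ1, hbound⟩ := hACK
  exact ⟨M, ρ, hM, hρ0, hρ1, hbound, hsum⟩
end

section
/- Let Θ ⊂ ℝ^p be convex and compact and let A, C, K be continuously differentiable maps from ℝ^p to real matrices of sizes d×m, m×m, and m×d respectively, with sup_{θ∈Θ} ‖A(θ)‖_op < ∞, sup_{θ∈Θ} ‖K(θ)‖_op < ∞, bounded derivatives on Θ, and sup_{θ∈Θ} ‖C(θ)‖_op ≤ c̄ for some c̄ ∈ [0,1). Then there exists M ≥ 0 such that for every θ ∈ Θ and every j ≥ 1, the Fréchet derivative at θ of the map θ ↦ A(θ)·C(θ)^j·K(θ) has operator norm at most M·(j+1)·c̄^{j−1}; consequently ∑_{j=1}^∞ sup_{θ∈Θ} ‖D_θ(A(θ)·C(θ)^j·K(θ))‖ < ∞. -/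
attribute [local instance] Matrix.normedAddCommGroup Matrix.normedSpace

noncomputable abbrev matrixNormTopology {m n : Type*} [Fintype m] [Fintype n] :
    TopologicalSpace (Matrix m n ℝ) :=
  (Matrix.normedAddCommGroup : NormedAddCommGroup (Matrix m n ℝ)).toUniformSpace.toTopologicalSpace

attribute [local instance] matrixNormTopology

/-- The map `θ ↦ A(θ) C(θ)^j K(θ)`, viewed as valued in continuous linear maps between
Euclidean spaces (so that its Fréchet derivative is measured with respect to the
operator/spectral norm on matrices). -/
noncomputable def prodMap {p d m : ℕ}
    (A : EuclideanSpace ℝ (Fin p) → Matrix (Fin d) (Fin m) ℝ)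
    (C : EuclideanSpace ℝ (Fin p) → Matrix (Fin m) (Fin m) ℝ)
    (K : EuclideanSpace ℝ (Fin p) → Matrix (Fin m) (Fin d) ℝ) (j : ℕ)
    (θ : EuclideanSpace ℝ (Fin p)) :
    EuclideanSpace ℝ (Fin d) →L[ℝ] EuclideanSpace ℝ (Fin d) :=
  LinearMap.toContinuousLinearMap (Matrix.toEuclideanLin (A θ * C θ ^ j * K θ))

/-!
Transported along the multiplicative map `X ↦ toEuclideanLin X`, `prodMap A C K j` becomes
`θ ↦ a θ ∘ c θ ^ j ∘ k θ` for operator-valued `a`, `c`, `k`. The product rule and induction give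
`‖D(c ^ (n + 1))‖ ≤ (n + 1) ‖c‖ ^ n ‖Dc‖`, hence `‖D(a c ^ (n + 1) k)‖ ≤ M (n + 2) c̄ ^ n` with `M`
depending only on the bounds for `A`, `C`, `K` and their derivatives. Since `c̄ < 1`, the series
`∑ (n + 2) c̄ ^ n` converges, and it dominates the suprema over `Θ`.
-/
section CLMCalculus

variable {𝕜 E F G H : Type*} [NontriviallyNormedField 𝕜]
  [NormedAddCommGroup E] [NormedSpace 𝕜 E] [NormedAddCommGroup F] [NormedSpace 𝕜 F]
  [NormedAddCommGroup G] [NormedSpace 𝕜 G] [NormedAddCommGroup H] [NormedSpace 𝕜 H]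
  {x : E}

theorem norm_fderiv_clm_comp_le {c : E → G →L[𝕜] H} {d : E → F →L[𝕜] G}
    (hc : DifferentiableAt 𝕜 c x) (hd : DifferentiableAt 𝕜 d x) :
    ‖fderiv 𝕜 (fun y => (c y).comp (d y)) x‖ ≤
      ‖c x‖ * ‖fderiv 𝕜 d x‖ + ‖fderiv 𝕜 c x‖ * ‖d x‖ := by
  rw [fderiv_clm_comp hc hd]
  refine norm_add_le_of_le (E := E →L[𝕜] F →L[𝕜] H) ?_ ?_
  · refine ContinuousLinearMap.opNorm_le_bound _ (by positivity) fun v => ?_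
    calc ‖(c x).comp (fderiv 𝕜 d x v)‖ ≤ ‖c x‖ * ‖fderiv 𝕜 d x v‖ :=
          ContinuousLinearMap.opNorm_comp_le _ _
      _ ≤ ‖c x‖ * (‖fderiv 𝕜 d x‖ * ‖v‖) := by gcongr; exact (fderiv 𝕜 d x).le_opNorm v
      _ = _ := by ring
  · refine ContinuousLinearMap.opNorm_le_bound _ (by positivity) fun v => ?_
    calc ‖(fderiv 𝕜 c x v).comp (d x)‖ ≤ ‖fderiv 𝕜 c x v‖ * ‖d x‖ :=
          ContinuousLinearMap.opNorm_comp_le _ _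
      _ ≤ ‖fderiv 𝕜 c x‖ * ‖v‖ * ‖d x‖ := by gcongr; exact (fderiv 𝕜 c x).le_opNorm v
      _ = _ := by ring

theorem norm_fderiv_clm_pow_succ_le {c : E → F →L[𝕜] F} (hc : DifferentiableAt 𝕜 c x) (n : ℕ) :
    ‖fderiv 𝕜 (fun y => c y ^ (n + 1)) x‖ ≤ (n + 1) * ‖c x‖ ^ n * ‖fderiv 𝕜 c x‖ := by
  induction n with
  | zero => simp
  | succ n ih =>
    have hpow : (fun y => c y ^ (n + 1 + 1)) = fun y => (c y ^ (n + 1)).comp (c y) := by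
      simp only [pow_succ _ (n + 1), ContinuousLinearMap.mul_def]
    rw [hpow]
    refine (norm_fderiv_clm_comp_le (hc.fun_pow _) hc).trans ?_
    calc ‖c x ^ (n + 1)‖ * ‖fderiv 𝕜 c x‖ + ‖fderiv 𝕜 (fun y => c y ^ (n + 1)) x‖ * ‖c x‖
        ≤ ‖c x‖ ^ (n + 1) * ‖fderiv 𝕜 c x‖ + (n + 1) * ‖c x‖ ^ n * ‖fderiv 𝕜 c x‖ * ‖c x‖ := by
          gcongr
          exact norm_pow_le' _ n.succ_pos
      _ = (↑(n + 1) + 1) * ‖c x‖ ^ (n + 1) * ‖fderiv 𝕜 c x‖ := by push_cast; ring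

theorem norm_fderiv_clm_comp_pow_comp_le {a : E → G →L[𝕜] H} {c : E → G →L[𝕜] G}
    {k : E → F →L[𝕜] G} (ha : DifferentiableAt 𝕜 a x) (hc : DifferentiableAt 𝕜 c x)
    (hk : DifferentiableAt 𝕜 k x) (n : ℕ) :
    ‖fderiv 𝕜 (fun y => ((a y).comp (c y ^ (n + 1))).comp (k y)) x‖ ≤
      ‖fderiv 𝕜 a x‖ * ‖c x‖ ^ (n + 1) * ‖k x‖ +
        ‖a x‖ * ((n + 1) * ‖c x‖ ^ n * ‖fderiv 𝕜 c x‖) * ‖k x‖ +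
          ‖a x‖ * ‖c x‖ ^ (n + 1) * ‖fderiv 𝕜 k x‖ := by
  have hac := ha.clm_comp (hc.fun_pow (n + 1))
  refine (norm_fderiv_clm_comp_le hac hk).trans ?_
  have hcpow := norm_pow_le' (c x) n.succ_pos
  have hac' := (norm_fderiv_clm_comp_le ha (hc.fun_pow (n + 1))).trans
    (add_le_add (mul_le_mul_of_nonneg_left (norm_fderiv_clm_pow_succ_le hc n) (norm_nonneg _))
      (mul_le_mul_of_nonneg_left hcpow (norm_nonneg (fderiv 𝕜 a x))))
  calc ‖(a x).comp (c x ^ (n + 1))‖ * ‖fderiv 𝕜 k x‖ +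
        ‖fderiv 𝕜 (fun y => (a y).comp (c y ^ (n + 1))) x‖ * ‖k x‖
      ≤ ‖a x‖ * ‖c x‖ ^ (n + 1) * ‖fderiv 𝕜 k x‖ +
        (‖a x‖ * ((n + 1) * ‖c x‖ ^ n * ‖fderiv 𝕜 c x‖) + ‖fderiv 𝕜 a x‖ * ‖c x‖ ^ (n + 1)) *
          ‖k x‖ := by
        gcongr
        exact (ContinuousLinearMap.opNorm_comp_le _ _).trans (by gcongr)
    _ = _ := by ring

theorem norm_fderiv_clm_comp_pow_comp_le_of_le {a : E → G →L[𝕜] H} {c : E → G →L[𝕜] G}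
    {k : E → F →L[𝕜] G} (ha : DifferentiableAt 𝕜 a x) (hc : DifferentiableAt 𝕜 c x)
    (hk : DifferentiableAt 𝕜 k x) {α γ κ α' γ' κ' : ℝ} (hα : ‖a x‖ ≤ α) (hγ : ‖c x‖ ≤ γ)
    (hγ1 : γ ≤ 1) (hκ : ‖k x‖ ≤ κ) (hα' : ‖fderiv 𝕜 a x‖ ≤ α') (hγ' : ‖fderiv 𝕜 c x‖ ≤ γ')
    (hκ' : ‖fderiv 𝕜 k x‖ ≤ κ') (n : ℕ) :
    ‖fderiv 𝕜 (fun y => ((a y).comp (c y ^ (n + 1))).comp (k y)) x‖ ≤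
      (α' * κ + α * γ' * κ + α * κ') * (n + 2) * γ ^ n := by
  have hα0 : 0 ≤ α := (norm_nonneg _).trans hα
  have hγ0 : 0 ≤ γ := (norm_nonneg _).trans hγ
  have hκ0 : 0 ≤ κ := (norm_nonneg _).trans hκ
  have hα'0 : 0 ≤ α' := (ContinuousLinearMap.opNorm_nonneg _).trans hα'
  have hγ'0 : 0 ≤ γ' := (ContinuousLinearMap.opNorm_nonneg _).trans hγ'
  have hκ'0 : 0 ≤ κ' := (ContinuousLinearMap.opNorm_nonneg _).trans hκ'
  have hpow : γ ^ (n + 1) ≤ (n + 2) * γ ^ n := by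
    rw [pow_succ']
    gcongr
    linarith
  refine (norm_fderiv_clm_comp_pow_comp_le ha hc hk n).trans ?_
  calc _ ≤ α' * γ ^ (n + 1) * κ + α * ((n + 1) * γ ^ n * γ') * κ + α * γ ^ (n + 1) * κ' := by
        gcongr
    _ ≤ _ := by
        nlinarith [mul_le_mul_of_nonneg_left hpow (mul_nonneg hα'0 hκ0),
          mul_le_mul_of_nonneg_left hpow (mul_nonneg hα0 hκ'0),
          mul_nonneg (mul_nonneg (mul_nonneg hα0 hγ'0) hκ0) (pow_nonneg hγ0 n)]

end CLMCalculus

noncomputable def matrixToEuclideanCLM {l n : Type*} [Fintype l] [Fintype n] [DecidableEq n] :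
    Matrix l n ℝ →L[ℝ] EuclideanSpace ℝ n →L[ℝ] EuclideanSpace ℝ l :=
  LinearMap.toContinuousLinearMap
    (LinearMap.toContinuousLinearMap.toLinearMap ∘ₗ Matrix.toEuclideanLin.toLinearMap)

theorem matrixToEuclideanCLM_mul {l m n : Type*} [Fintype l] [Fintype m] [Fintype n]
    [DecidableEq m] [DecidableEq n] (X : Matrix l m ℝ) (Y : Matrix m n ℝ) :
    matrixToEuclideanCLM (X * Y) = (matrixToEuclideanCLM X).comp (matrixToEuclideanCLM Y) := by
  ext v
  simp [matrixToEuclideanCLM, Matrix.toLpLin_eq_toLin, Matrix.toLin_mul _ (PiLp.basisFun 2 ℝ m)]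

theorem matrixToEuclideanCLM_pow {n : Type*} [Fintype n] [DecidableEq n] (X : Matrix n n ℝ)
    (k : ℕ) : matrixToEuclideanCLM (X ^ k) = matrixToEuclideanCLM X ^ k := by
  induction k with
  | zero => ext v; simp [matrixToEuclideanCLM]
  | succ k ih => rw [pow_succ, pow_succ, matrixToEuclideanCLM_mul, ih]; rfl

theorem prodMap_eq_comp {p d m : ℕ}
    (A : EuclideanSpace ℝ (Fin p) → Matrix (Fin d) (Fin m) ℝ)
    (C : EuclideanSpace ℝ (Fin p) → Matrix (Fin m) (Fin m) ℝ)
    (K : EuclideanSpace ℝ (Fin p) → Matrix (Fin m) (Fin d) ℝ) (j : ℕ) :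
    prodMap A C K j = fun θ => ((matrixToEuclideanCLM (A θ)).comp
      (matrixToEuclideanCLM (C θ) ^ j)).comp (matrixToEuclideanCLM (K θ)) := by
  ext1 θ
  rw [← matrixToEuclideanCLM_pow, ← matrixToEuclideanCLM_mul, ← matrixToEuclideanCLM_mul]
  rfl

theorem norm_fderiv_matrixToEuclideanCLM_le {E : Type*} [NormedAddCommGroup E] [NormedSpace ℝ E]
    {m n : Type*} [Fintype m] [Fintype n] [DecidableEq n] {f : E → Matrix m n ℝ} {x : E}
    (hf : DifferentiableAt ℝ f x) :
    ‖fderiv ℝ (fun y => matrixToEuclideanCLM (f y)) x‖ ≤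
      ‖(matrixToEuclideanCLM : Matrix m n ℝ →L[ℝ] _)‖ * ‖fderiv ℝ f x‖ := by
  have h : HasFDerivAt (fun y => matrixToEuclideanCLM (f y))
      (matrixToEuclideanCLM.comp (fderiv ℝ f x)) x :=
    (matrixToEuclideanCLM (l := m) (n := n)).hasFDerivAt.comp x hf.hasFDerivAt
  rw [h.fderiv]
  exact ContinuousLinearMap.opNorm_comp_le _ _

theorem exists_norm_fderiv_prodMap_succ_le {p d m : ℕ} {CA CK D : ℝ} (hCA : 0 ≤ CA)
    (hCK : 0 ≤ CK) (hD : 0 ≤ D) :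
    ∃ M : ℝ, 0 ≤ M ∧ ∀ (A : EuclideanSpace ℝ (Fin p) → Matrix (Fin d) (Fin m) ℝ)
      (C : EuclideanSpace ℝ (Fin p) → Matrix (Fin m) (Fin m) ℝ)
      (K : EuclideanSpace ℝ (Fin p) → Matrix (Fin m) (Fin d) ℝ) (θ : EuclideanSpace ℝ (Fin p))
      (c : ℝ), DifferentiableAt ℝ A θ → DifferentiableAt ℝ C θ → DifferentiableAt ℝ K θ →
      opNorm (A θ) ≤ CA → opNorm (C θ) ≤ c → c ≤ 1 → opNorm (K θ) ≤ CK →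
      ‖fderiv ℝ A θ‖ ≤ D → ‖fderiv ℝ C θ‖ ≤ D → ‖fderiv ℝ K θ‖ ≤ D →
      ∀ n : ℕ, ‖fderiv ℝ (prodMap A C K (n + 1)) θ‖ ≤ M * ((n : ℝ) + 2) * c ^ n := by
  refine ⟨‖(matrixToEuclideanCLM : Matrix (Fin d) (Fin m) ℝ →L[ℝ] _)‖ * D * CK +
      CA * (‖(matrixToEuclideanCLM : Matrix (Fin m) (Fin m) ℝ →L[ℝ] _)‖ * D) * CK +
      CA * (‖(matrixToEuclideanCLM : Matrix (Fin m) (Fin d) ℝ →L[ℝ] _)‖ * D), by positivity,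
    fun A C K θ c hdA hdC hdK hAθ hCθ hc1 hKθ hDA hDC hDK n => ?_⟩
  have hE {r s : ℕ} {f : EuclideanSpace ℝ (Fin p) → Matrix (Fin r) (Fin s) ℝ}
      (hf : DifferentiableAt ℝ f θ) : DifferentiableAt ℝ (fun y => matrixToEuclideanCLM (f y)) θ :=
    (matrixToEuclideanCLM (l := Fin r) (n := Fin s)).differentiableAt.comp θ hf
  rw [prodMap_eq_comp]
  -- `opNorm X` is by definition `‖matrixToEuclideanCLM X‖`.
  exact norm_fderiv_clm_comp_pow_comp_le_of_le (hE hdA) (hE hdC) (hE hdK) hAθ hCθ hc1 hKθ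
    ((norm_fderiv_matrixToEuclideanCLM_le hdA).trans (by gcongr))
    ((norm_fderiv_matrixToEuclideanCLM_le hdC).trans (by gcongr))
    ((norm_fderiv_matrixToEuclideanCLM_le hdK).trans (by gcongr)) n

theorem summable_natCast_add_mul_geometric {c : ℝ} (hc : ‖c‖ < 1) (a : ℝ) :
    Summable fun n : ℕ => ((n : ℝ) + a) * c ^ n := by
  have hn : Summable fun n : ℕ => (n : ℝ) * c ^ n := by
    simpa using summable_pow_mul_geometric_of_norm_lt_one 1 hc
  simpa [add_mul] using hn.add ((summable_geometric_of_norm_lt_one hc).mul_left a)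

theorem summable_fderiv_opNorm_of_contraction_general
    {p d m : ℕ} (Θ : Set (EuclideanSpace ℝ (Fin p)))
    (A : EuclideanSpace ℝ (Fin p) → Matrix (Fin d) (Fin m) ℝ)
    (C : EuclideanSpace ℝ (Fin p) → Matrix (Fin m) (Fin m) ℝ)
    (K : EuclideanSpace ℝ (Fin p) → Matrix (Fin m) (Fin d) ℝ)
    (hA : ContDiff ℝ 1 A) (hC : ContDiff ℝ 1 C) (hK : ContDiff ℝ 1 K)
    (CA CK : ℝ) (hCA : ∀ θ ∈ Θ, opNorm (A θ) ≤ CA) (hCK : ∀ θ ∈ Θ, opNorm (K θ) ≤ CK)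
    (D : ℝ) (hDA : ∀ θ ∈ Θ, ‖fderiv ℝ A θ‖ ≤ D) (hDC : ∀ θ ∈ Θ, ‖fderiv ℝ C θ‖ ≤ D)
    (hDK : ∀ θ ∈ Θ, ‖fderiv ℝ K θ‖ ≤ D)
    (c : ℝ) (hc0 : 0 ≤ c) (hc1 : c < 1) (hCc : ∀ θ ∈ Θ, opNorm (C θ) ≤ c) :
    ∃ M : ℝ, 0 ≤ M ∧
      (∀ θ ∈ Θ, ∀ j : ℕ, 1 ≤ j →
        ‖fderiv ℝ (prodMap A C K j) θ‖ ≤ M * ((j : ℝ) + 1) * c ^ (j - 1)) ∧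
      Summable (fun j : ℕ => ⨆ θ ∈ Θ, ‖fderiv ℝ (prodMap A C K (j + 1)) θ‖) := by
  rcases Θ.eq_empty_or_nonempty with rfl | ⟨θ₀, hθ₀⟩
  · exact ⟨0, le_rfl, by simp, by simp⟩
  obtain ⟨M, hM0, hM⟩ := exists_norm_fderiv_prodMap_succ_le (p := p) (d := d) (m := m)
    ((norm_nonneg _).trans (hCA θ₀ hθ₀)) ((norm_nonneg _).trans (hCK θ₀ hθ₀))
    ((norm_nonneg _).trans (hDA θ₀ hθ₀))
  have hbound (θ : EuclideanSpace ℝ (Fin p)) (hθ : θ ∈ Θ) (n : ℕ) :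
      ‖fderiv ℝ (prodMap A C K (n + 1)) θ‖ ≤ M * ((n : ℝ) + 2) * c ^ n :=
    hM A C K θ c (hA.differentiable one_ne_zero θ) (hC.differentiable one_ne_zero θ)
      (hK.differentiable one_ne_zero θ) (hCA θ hθ) (hCc θ hθ) hc1.le (hCK θ hθ) (hDA θ hθ)
      (hDC θ hθ) (hDK θ hθ) n
  refine ⟨M, hM0, fun θ hθ j hj => ?_, ?_⟩
  · obtain ⟨n, rfl⟩ := Nat.exists_eq_add_of_le' hj
    simpa [add_assoc, one_add_one_eq_two] using hbound θ hθ n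
  · have hgeom : Summable fun n : ℕ => M * ((n : ℝ) + 2) * c ^ n := by
      simpa [mul_assoc] using (summable_natCast_add_mul_geometric
        (by rwa [Real.norm_of_nonneg hc0]) 2).mul_left M
    refine hgeom.of_nonneg_of_le (fun n => Real.iSup_nonneg fun θ => Real.iSup_nonneg fun _ =>
      ContinuousLinearMap.opNorm_nonneg _) fun n => Real.iSup_le (fun θ => Real.iSup_le
        (hbound θ · n) (by positivity)) (by positivity)

/-- **Summable derivative bounds for `θ ↦ A(θ) C(θ)^j K(θ)`.**
If `A, C, K` are continuously differentiable with operator norms bounded on the convex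
compact set `Θ`, derivatives bounded on `Θ`, and `‖C(θ)‖_op ≤ c̄ < 1` on `Θ`, then there is
`M ≥ 0` such that for all `θ ∈ Θ` and `j ≥ 1` the Fréchet derivative of
`θ ↦ A(θ) C(θ)^j K(θ)` has operator norm at most `M (j+1) c̄^{j-1}`; consequently
`∑_{j≥1} sup_{θ ∈ Θ} ‖D_θ (A(θ) C(θ)^j K(θ))‖ < ∞`. -/
theorem summable_fderiv_opNorm_of_contraction
    {p d m : ℕ} (Θ : Set (EuclideanSpace ℝ (Fin p)))
    (hconv : Convex ℝ Θ) (hcomp : IsCompact Θ)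
    (A : EuclideanSpace ℝ (Fin p) → Matrix (Fin d) (Fin m) ℝ)
    (C : EuclideanSpace ℝ (Fin p) → Matrix (Fin m) (Fin m) ℝ)
    (K : EuclideanSpace ℝ (Fin p) → Matrix (Fin m) (Fin d) ℝ)
    (hA : ContDiff ℝ 1 A) (hC : ContDiff ℝ 1 C) (hK : ContDiff ℝ 1 K)
    (CA CK : ℝ) (hCA : ∀ θ ∈ Θ, opNorm (A θ) ≤ CA) (hCK : ∀ θ ∈ Θ, opNorm (K θ) ≤ CK)
    (D : ℝ) (hDA : ∀ θ ∈ Θ, ‖fderiv ℝ A θ‖ ≤ D) (hDC : ∀ θ ∈ Θ, ‖fderiv ℝ C θ‖ ≤ D)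
    (hDK : ∀ θ ∈ Θ, ‖fderiv ℝ K θ‖ ≤ D)
    (c : ℝ) (hc0 : 0 ≤ c) (hc1 : c < 1) (hCc : ∀ θ ∈ Θ, opNorm (C θ) ≤ c) :
    ∃ M : ℝ, 0 ≤ M ∧
      (∀ θ ∈ Θ, ∀ j : ℕ, 1 ≤ j →
        ‖fderiv ℝ (prodMap A C K j) θ‖ ≤ M * ((j : ℝ) + 1) * c ^ (j - 1)) ∧
      Summable (fun j : ℕ => ⨆ θ ∈ Θ, ‖fderiv ℝ (prodMap A C K (j + 1)) θ‖) :=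
  summable_fderiv_opNorm_of_contraction_general Θ A C K hA hC hK CA CK hCA hCK D hDA hDC hDK c hc0
    hc1 hCc
end

section
/- Let Σ and Σ̃ be d×d real symmetric positive semidefinite matrices. Then for every d×d real matrix C such that the 2d×2d block matrix with blocks [[Σ, C], [Cᵀ, Σ̃]] is positive semidefinite, one has tr(C) ≤ tr((Σ̃^{1/2}·Σ·Σ̃^{1/2})^{1/2}). -/
/-!
Conjugating the block matrix by the column `[P; -Q]` gives
`2 tr (Pᵀ C Q) ≤ tr (Pᵀ Σ P) + tr (Qᵀ Σ̃ Q)`. Let `B = Σ̃^{1/2}`, `A = B Σ B`, `T = A^{1/2}` and,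
for `δ > 0`, `V = (T + δ)^{1/2}`, `W = V⁻¹`. Taking `P = B W` and `Q = B⁺ V` makes the left side
`2 tr C`, because block positivity forces `C` to vanish on `ker Σ̃`, while the right side is at most
`tr (A (T + δ)⁻¹) + tr (T + δ) ≤ 2 tr T + d δ`. Let `δ → 0`.
-/

open Matrix
open scoped Classical

/-- The unique positive semidefinite square root of a positive semidefinite real matrix
(junk value `0` if the matrix is not positive semidefinite). -/
noncomputable def psdSqrt {d : ℕ} (A : Matrix (Fin d) (Fin d) ℝ) : Matrix (Fin d) (Fin d) ℝ :=
  if h : A.PosSemidef then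
    (h.1.eigenvectorUnitary : Matrix (Fin d) (Fin d) ℝ) * diagonal (fun i => Real.sqrt (h.1.eigenvalues i)) *
      (star h.1.eigenvectorUnitary : Matrix (Fin d) (Fin d) ℝ)
  else 0

open scoped MatrixOrder

theorem psdSqrt_eq_cfc_sqrt {d : ℕ} {A : Matrix (Fin d) (Fin d) ℝ} (hA : A.PosSemidef) :
    psdSqrt A = cfc Real.sqrt A := by
  rw [psdSqrt, dif_pos hA, hA.1.cfc_eq]
  rfl

namespace Matrix

section Blocks

variable {m n k : Type*} [Fintype m] [Fintype n] [Fintype k]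
  {S : Matrix m m ℝ} {St : Matrix n n ℝ} {C : Matrix m n ℝ}

theorem PosSemidef.two_mul_trace_le_of_fromBlocks (h : (fromBlocks S C Cᵀ St).PosSemidef)
    (P : Matrix m k ℝ) (Q : Matrix n k ℝ) :
    2 * (Pᵀ * C * Q).trace ≤ (Pᵀ * S * P).trace + (Qᵀ * St * Q).trace := by
  have hR := (h.conjTranspose_mul_mul_same (fromRows P (-Q))).trace_nonneg
  rw [conjTranspose_eq_transpose_of_trivial, transpose_fromRows, Matrix.mul_assoc,
    fromBlocks_mul_fromRows, fromCols_mul_fromRows] at hR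
  simp only [Matrix.mul_add, Matrix.mul_neg, transpose_neg, Matrix.neg_mul, neg_neg, trace_add,
    trace_neg, ← Matrix.mul_assoc] at hR
  have hCt : (Qᵀ * Cᵀ * P).trace = (Pᵀ * C * Q).trace := by
    rw [← trace_transpose]; simp [Matrix.mul_assoc]
  linarith

theorem PosSemidef.mulVec_eq_zero_of_fromBlocks (h : (fromBlocks S C Cᵀ St).PosSemidef)
    {v : n → ℝ} (hv : St *ᵥ v = 0) : C *ᵥ v = 0 := by
  have hw : star (Sum.elim 0 v) ⬝ᵥ fromBlocks S C Cᵀ St *ᵥ Sum.elim 0 v = 0 := by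
    simp [fromBlocks_mulVec, hv]
  simpa [fromBlocks_mulVec] using
    congrArg (· ∘ Sum.inl) ((h.dotProduct_mulVec_zero_iff _).1 hw)

theorem PosSemidef.mul_eq_zero_of_fromBlocks [DecidableEq k]
    (h : (fromBlocks S C Cᵀ St).PosSemidef) {D : Matrix n k ℝ} (hD : St * D = 0) :
    C * D = 0 := by
  refine ext_of_mulVec_single fun j => ?_
  rw [← mulVec_mulVec, zero_mulVec]
  exact h.mulVec_eq_zero_of_fromBlocks (by rw [mulVec_mulVec, hD, zero_mulVec])

end Blocks

variable {n : Type*} [Fintype n] [DecidableEq n]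

theorem IsHermitian.trace_cfc {𝕜 : Type*} [RCLike 𝕜] {A : Matrix n n 𝕜} (hA : A.IsHermitian)
    (f : ℝ → ℝ) : (cfc f A).trace = ∑ i, (f (hA.eigenvalues i) : 𝕜) := by
  rw [hA.cfc_eq, IsHermitian.cfc, Unitary.conjStarAlgAut_apply, trace_mul_cycle,
    Unitary.star_mul_self_of_mem hA.eigenvectorUnitary.2, one_mul, trace_diagonal]
  rfl

theorem cfc_mul_cfc (f g : ℝ → ℝ) (A : Matrix n n ℝ) :
    cfc f A * cfc g A = cfc (fun t => f t * g t) A :=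
  (cfc_mul f g A (A.finite_real_spectrum.continuousOn f)
    (A.finite_real_spectrum.continuousOn g)).symm

theorem transpose_cfc (f : ℝ → ℝ) (A : Matrix n n ℝ) : (cfc f A)ᵀ = cfc f A := by
  simpa [IsSelfAdjoint, star_eq_conjTranspose] using cfc_predicate f A

theorem PosSemidef.mul_cfc_inv_sqrt_mul_sqrt_of_fromBlocks {S St C : Matrix n n ℝ}
    (h : (fromBlocks S C Cᵀ St).PosSemidef) (hSt : St.PosSemidef) :
    C * cfc (fun t => (√t)⁻¹ * √t) St = C := by
  set E := cfc (fun t => (√t)⁻¹ * √t) St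
  have hStE : St * E = St := by
    calc _ = cfc id St * E := by rw [cfc_id ℝ St]
      _ = cfc id St := by
        rw [cfc_mul_cfc]
        refine cfc_congr fun t ht => ?_
        rcases (spectrum_nonneg_of_nonneg hSt.nonneg ht).eq_or_lt with h0 | hpos
        · simp [← h0]
        · simp [(Real.sqrt_pos.2 hpos).ne']
      _ = St := cfc_id ℝ St
  have := h.mul_eq_zero_of_fromBlocks (D := 1 - E)
    (by rw [Matrix.mul_sub, hStE, mul_one, sub_self])
  rwa [Matrix.mul_sub, mul_one, sub_eq_zero, eq_comm] at this

theorem PosSemidef.two_mul_trace_le_of_fromBlocks_of_mul_transpose_eq_one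
    {S St C : Matrix n n ℝ} (h : (fromBlocks S C Cᵀ St).PosSemidef) (hSt : St.PosSemidef)
    {V W : Matrix n n ℝ} (hVW : V * Wᵀ = 1) :
    2 * C.trace ≤
      (Wᵀ * (cfc Real.sqrt St * S * cfc Real.sqrt St) * W).trace + (Vᵀ * V).trace := by
  set B := cfc Real.sqrt St
  -- Since `0⁻¹ = 0`, `B'` is the pseudo-inverse of `B` and `E` the projection onto its range.
  set B' := cfc (fun t => (√t)⁻¹) St
  set E := cfc (fun t => (√t)⁻¹ * √t) St
  have hB'B : B' * B = E := cfc_mul_cfc _ _ St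
  have hB'StB' : B' * St * B' = E := by
    calc _ = B' * cfc id St * B' := by rw [cfc_id ℝ St]
      _ = E := by
        rw [cfc_mul_cfc, cfc_mul_cfc]
        congr with t
        rcases le_or_gt t 0 with ht | ht
        · simp [Real.sqrt_eq_zero'.2 ht]
        · field_simp
          simp [Real.sq_sqrt ht.le]
  have hE1 : E ≤ 1 := cfc_le_one _ _ fun t _ => by
    rcases eq_or_ne (√t) 0 with h | h <;> simp [h]
  have hCE : C * E = C := h.mul_cfc_inv_sqrt_mul_sqrt_of_fromBlocks hSt
  have hBt : Bᵀ = B := transpose_cfc _ _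
  have hB't : B'ᵀ = B' := transpose_cfc _ _
  have hPCQ : ((B * W)ᵀ * C * (B' * V)).trace = C.trace := by
    calc _ = ((Wᵀ * B) * (C * B' * V)).trace := by
          rw [transpose_mul, hBt]; simp only [Matrix.mul_assoc]
      _ = (C * B' * (V * Wᵀ) * B).trace := by rw [trace_mul_comm]; simp only [Matrix.mul_assoc]
      _ = C.trace := by rw [hVW, Matrix.mul_one, Matrix.mul_assoc, hB'B, hCE]
  have hPSP : (B * W)ᵀ * S * (B * W) = Wᵀ * (B * S * B) * W := by
    simp only [transpose_mul, hBt, Matrix.mul_assoc]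
  have hQStQ : ((B' * V)ᵀ * St * (B' * V)).trace ≤ (Vᵀ * V).trace := by
    have := ((nonneg_iff_posSemidef.1 (sub_nonneg.2 hE1)).conjTranspose_mul_mul_same
      V).trace_nonneg
    rw [conjTranspose_eq_transpose_of_trivial, Matrix.mul_sub, Matrix.sub_mul, trace_sub,
      Matrix.mul_one, sub_nonneg] at this
    rwa [transpose_mul, hB't, show Vᵀ * B' * St * (B' * V) = Vᵀ * (B' * St * B') * V by
      simp only [Matrix.mul_assoc], hB'StB']
  have key := h.two_mul_trace_le_of_fromBlocks (B * W) (B' * V)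
  rw [hPCQ, hPSP] at key
  linarith

theorem PosSemidef.exists_mul_transpose_eq_one_and_trace_le {A : Matrix n n ℝ}
    (hA : A.PosSemidef) {ε : ℝ} (hε : 0 < ε) :
    ∃ V W : Matrix n n ℝ, V * Wᵀ = 1 ∧
      (Wᵀ * A * W).trace + (Vᵀ * V).trace ≤ 2 * (cfc Real.sqrt A).trace + ε := by
  set δ := ε / (Fintype.card n + 1)
  have hδ : 0 < δ := by positivity
  set g : ℝ → ℝ := fun t => √(√t + δ)
  have hg (t : ℝ) : g t ^ 2 = √t + δ := Real.sq_sqrt (by positivity)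
  have hg0 (t : ℝ) : g t ≠ 0 := by positivity
  refine ⟨cfc g A, cfc (fun t => (g t)⁻¹) A, ?_, ?_⟩
  · rw [transpose_cfc, cfc_mul_cfc, ← cfc_one ℝ A]
    exact cfc_congr fun t _ => mul_inv_cancel₀ (hg0 t)
  have hWAW : cfc (fun t => (g t)⁻¹) A * A * cfc (fun t => (g t)⁻¹) A =
      cfc (fun t => (g t)⁻¹ * t * (g t)⁻¹) A := by
    rw [← cfc_mul_cfc, ← cfc_mul_cfc, cfc_id' ℝ A]
  rw [transpose_cfc, transpose_cfc, hWAW, cfc_mul_cfc, hA.1.trace_cfc, hA.1.trace_cfc,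
    hA.1.trace_cfc]
  simp only [RCLike.ofReal_real_eq_id, id]
  have hle (t : ℝ) (ht : 0 ≤ t) : (g t)⁻¹ * t * (g t)⁻¹ + g t * g t ≤ 2 * √t + δ := by
    have hsq : (g t)⁻¹ * t * (g t)⁻¹ = t / (√t + δ) := by
      rw [← hg]; field_simp
    have hdiv : t / (√t + δ) ≤ √t := by
      rw [div_le_iff₀ (by positivity)]
      nlinarith [Real.sq_sqrt ht, Real.sqrt_nonneg t]
    rw [hsq, ← sq, hg]
    linarith
  have hcard : Fintype.card n * δ ≤ ε := by
    rw [mul_div_assoc']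
    exact div_le_of_le_mul₀ (by positivity) hε.le (by linarith)
  calc _ ≤ ∑ i, (2 * √(hA.1.eigenvalues i) + δ) := by
        rw [← Finset.sum_add_distrib]
        exact Finset.sum_le_sum fun i _ => hle _ (hA.eigenvalues_nonneg i)
    _ ≤ 2 * ∑ i, √(hA.1.eigenvalues i) + ε := by
        rw [Finset.sum_add_distrib, Finset.mul_sum, Finset.sum_const, Finset.card_univ,
          nsmul_eq_mul]
        linarith

end Matrix

/-- **Trace bound for admissible cross-covariances.**
If `Σ` and `Σ̃` are positive semidefinite and the block matrix `[[Σ, C], [Cᵀ, Σ̃]]` is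
positive semidefinite, then `tr C ≤ tr ((Σ̃^{1/2} Σ Σ̃^{1/2})^{1/2})`. -/
theorem trace_le_trace_sqrt_of_fromBlocks_posSemidef
    {d : ℕ} (S St : Matrix (Fin d) (Fin d) ℝ)
    (hS : S.PosSemidef) (hSt : St.PosSemidef)
    (C : Matrix (Fin d) (Fin d) ℝ)
    (hblock : (Matrix.fromBlocks S C Cᵀ St).PosSemidef) :
    C.trace ≤ (psdSqrt (psdSqrt St * S * psdSqrt St)).trace := by
  have hA : (cfc Real.sqrt St * S * cfc Real.sqrt St).PosSemidef := by
    simpa [conjTranspose_eq_transpose_of_trivial, transpose_cfc] using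
      hS.conjTranspose_mul_mul_same (cfc Real.sqrt St)
  rw [psdSqrt_eq_cfc_sqrt hSt, psdSqrt_eq_cfc_sqrt hA]
  refine le_of_forall_pos_le_add fun ε hε => ?_
  obtain ⟨V, W, hVW, hle⟩ := hA.exists_mul_transpose_eq_one_and_trace_le hε
  linarith [hblock.two_mul_trace_le_of_fromBlocks_of_mul_transpose_eq_one hSt hVW]
end

section
/- Let (Ω, F, μ) be a probability space, d ≥ 1, and (e_j)_{j∈ℕ} a sequence of measurable maps Ω → ℝ^d, each square-integrable with L²-norm (∫ ‖e_j‖² dμ)^{1/2} ≤ κ for a common constant κ < ∞. Let (Λ_j)_{j∈ℕ} be d×d real matrices with ∑_{j=0}^∞ ‖Λ_j‖_op < ∞, and let X : Ω → ℝ^d be a square-integrable map such that the partial sums ∑_{j=0}^{n} Λ_j·e_j converge to X in L²(μ; ℝ^d) as n → ∞. For m ∈ ℕ, let 𝒢_m ⊆ F be the σ-algebra generated by e_0, …, e_m. Then for every m, the L²-norm of X − E[X | 𝒢_m] satisfies (∫ ‖X − E[X | 𝒢_m]‖² dμ)^{1/2} ≤ κ·∑_{j=m+1}^∞ ‖Λ_j‖_op.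 -/
open MeasureTheory Filter

/-! The conditional expectation given `𝒢_m` is the orthogonal projection of `L²` onto the
`𝒢_m`-measurable functions, so it is at least as close to `X` as the `𝒢_m`-measurable partial sum
`S_m = ∑_{j ≤ m} Λ_j e_j`. By the triangle inequality and the bound `κ` on `‖e_j‖₂`, every later
partial sum satisfies `‖S_n - S_m‖₂ ≤ κ ∑_{j > m} ‖Λ_j‖_op`, and letting `n → ∞` gives the same
bound for `‖X - S_m‖₂`. -/

open scoped ENNReal

theorem Submodule.norm_sub_starProjection_le {𝕜 E : Type*} [RCLike 𝕜] [NormedAddCommGroup E]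
    [InnerProductSpace 𝕜 E] {U : Submodule 𝕜 E} [U.HasOrthogonalProjection] (y : E) {x : E}
    (hx : x ∈ U) : ‖y - U.starProjection y‖ ≤ ‖y - x‖ := by
  rw [starProjection_minimal]
  exact ciInf_le ⟨0, Set.forall_mem_range.2 fun _ => norm_nonneg _⟩ (⟨x, hx⟩ : U)

namespace MeasureTheory

variable {α : Type*} {m m0 : MeasurableSpace α} {μ : Measure α}

theorem toReal_eLpNorm_two_eq_sqrt_integral {E : Type*} [NormedAddCommGroup E] {f : α → E}
    (hf : AEStronglyMeasurable f μ) :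
    (eLpNorm f 2 μ).toReal = Real.sqrt (∫ x, ‖f x‖ ^ 2 ∂μ) := by
  rw [toReal_eLpNorm hf, Real.sqrt_eq_rpow, show (2 : ℝ≥0∞) = ((2 : NNReal) : ℝ≥0∞) from rfl,
    lpNorm_nnreal_eq_integral_norm_rpow two_ne_zero hf]
  norm_num

theorem eLpNorm_sub_condExp_le {E : Type*} [NormedAddCommGroup E] [InnerProductSpace ℝ E]
    [CompleteSpace E] [IsFiniteMeasure μ] (hm : m ≤ m0) {f g : α → E} (hf : MemLp f 2 μ)
    (hg : MemLp g 2 μ) (hgm : AEStronglyMeasurable[m] g μ) :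
    eLpNorm (f - μ[f|m]) 2 μ ≤ eLpNorm (f - g) 2 μ := by
  have : Fact (m ≤ m0) := ⟨hm⟩
  have hc : MemLp (μ[f|m]) 2 μ := hf.condExp one_le_two
  have hG : hg.toLp g ∈ lpMeas E ℝ m 2 μ :=
    mem_lpMeas_iff_aestronglyMeasurable.mpr (hgm.congr hg.coeFn_toLp.symm)
  have hC : hc.toLp _ = (condExpL2 E ℝ hm (hf.toLp f) : Lp E 2 μ) :=
    Lp.ext (hc.coeFn_toLp.trans (hf.condExpL2_ae_eq_condExp hm).symm)
  rw [← Lp.edist_toLp_toLp _ _ hf hc, ← Lp.edist_toLp_toLp _ _ hf hg, hC, edist_dist, edist_dist,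
    dist_eq_norm, dist_eq_norm]
  exact ENNReal.ofReal_le_ofReal (Submodule.norm_sub_starProjection_le _ hG)

theorem eLpNorm_clm_comp_le {E F : Type*} [NormedAddCommGroup E] [NormedSpace ℝ E]
    [NormedAddCommGroup F] [NormedSpace ℝ F] (L : E →L[ℝ] F) (f : α → E) (p : ℝ≥0∞) :
    eLpNorm (fun x => L (f x)) p μ ≤ ‖L‖ₑ * eLpNorm f p μ :=
  eLpNorm_le_nnreal_smul_eLpNorm_of_ae_le_mul (.of_forall fun x => L.le_opNorm (f x)) p

theorem eLpNorm_sum_clm_comp_le {ι E F : Type*} [NormedAddCommGroup E] [NormedSpace ℝ E]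
    [NormedAddCommGroup F] [NormedSpace ℝ F] {p : ℝ≥0∞} (hp : 1 ≤ p) {L : ι → E →L[ℝ] F}
    {e : ι → α → E} {s : Finset ι} (he : ∀ j ∈ s, AEStronglyMeasurable (e j) μ) {C : ℝ≥0∞}
    (hC : ∀ j ∈ s, eLpNorm (e j) p μ ≤ C) :
    eLpNorm (fun x => ∑ j ∈ s, L j (e j x)) p μ ≤ C * ∑ j ∈ s, ‖L j‖ₑ := by
  calc eLpNorm (fun x => ∑ j ∈ s, L j (e j x)) p μ
      ≤ ∑ j ∈ s, eLpNorm (fun x => L j (e j x)) p μ := by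
        simpa only [← Finset.sum_fn] using
          eLpNorm_sum_le (fun j hj => (L j).continuous.comp_aestronglyMeasurable (he j hj)) hp
    _ ≤ ∑ j ∈ s, ‖L j‖ₑ * C :=
        Finset.sum_le_sum fun j hj => (eLpNorm_clm_comp_le _ _ _).trans (by gcongr; exact hC j hj)
    _ = C * ∑ j ∈ s, ‖L j‖ₑ := by rw [← Finset.sum_mul, mul_comm]

theorem eLpNorm_sum_Ico_clm_comp_le {E F : Type*} [NormedAddCommGroup E] [NormedSpace ℝ E]
    [NormedAddCommGroup F] [NormedSpace ℝ F] {p : ℝ≥0∞} (hp : 1 ≤ p) {L : ℕ → E →L[ℝ] F}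
    {e : ℕ → α → E} (he : ∀ j, AEStronglyMeasurable (e j) μ) {C : ℝ≥0∞}
    (hC : ∀ j, eLpNorm (e j) p μ ≤ C) (m n : ℕ) :
    eLpNorm (fun x => ∑ j ∈ Finset.Ico m n, L j (e j x)) p μ ≤ C * ∑' j, ‖L (j + m)‖ₑ := by
  refine (eLpNorm_sum_clm_comp_le hp (fun j _ => he j) fun j _ => hC j).trans ?_
  gcongr
  rw [Finset.sum_Ico_eq_sum_range]
  simpa only [add_comm m] using ENNReal.sum_le_tsum _

theorem eLpNorm_sub_le_of_tendsto {ι E : Type*} [NormedAddCommGroup E] {l : Filter ι} [l.NeBot]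
    {p : ℝ≥0∞} (hp : 1 ≤ p) {F : ι → α → E} {X G : α → E}
    (hF : ∀ i, AEStronglyMeasurable (F i) μ) (hX : AEStronglyMeasurable X μ)
    (hG : AEStronglyMeasurable G μ) (hlim : Tendsto (fun i => eLpNorm (F i - X) p μ) l (nhds 0))
    {C : ℝ≥0∞} (hC : ∀ᶠ i in l, eLpNorm (F i - G) p μ ≤ C) :
    eLpNorm (X - G) p μ ≤ C := by
  refine ge_of_tendsto (by simpa only [zero_add] using hlim.add_const C) (hC.mono fun i hi => ?_)
  calc eLpNorm (X - G) p μ = eLpNorm ((X - F i) + (F i - G)) p μ := by rw [sub_add_sub_cancel]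
    _ ≤ eLpNorm (X - F i) p μ + eLpNorm (F i - G) p μ :=
        eLpNorm_add_le (hX.sub (hF i)) ((hF i).sub hG) hp
    _ ≤ eLpNorm (F i - X) p μ + C := by rw [eLpNorm_sub_comm]; gcongr

theorem stronglyMeasurable_sum_iSup_comap {ι E F : Type*} [NormedAddCommGroup E]
    [MeasurableSpace E] [OpensMeasurableSpace E] [SecondCountableTopology E]
    [NormedAddCommGroup F] {e : ι → α → E} {g : ι → E → F} (hg : ∀ j, Continuous (g j))
    (s : Finset ι) :
    StronglyMeasurable[⨆ j ∈ s, MeasurableSpace.comap (e j) inferInstance]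
      (fun x => ∑ j ∈ s, g j (e j x)) := by
  refine Finset.stronglyMeasurable_fun_sum _ fun j hj => (hg j).comp_stronglyMeasurable ?_
  have hle : MeasurableSpace.comap (e j) inferInstance ≤
      ⨆ j ∈ s, MeasurableSpace.comap (e j) inferInstance :=
    le_iSup₂ (f := fun j (_ : j ∈ s) => MeasurableSpace.comap (e j) inferInstance) j hj
  exact (measurable_iff_comap_le.mpr hle).stronglyMeasurable

end MeasureTheory

theorem vma_near_epoch_dependence_general
    {Ω : Type*} [MeasurableSpace Ω] (μ : Measure Ω) [IsProbabilityMeasure μ]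
    (d : ℕ)
    (e : ℕ → Ω → EuclideanSpace ℝ (Fin d))
    (hmeas : ∀ j, Measurable (e j))
    (hL2 : ∀ j, MemLp (e j) 2 μ)
    (κ : ℝ) (hκ : ∀ j, Real.sqrt (∫ ω, ‖e j ω‖ ^ 2 ∂μ) ≤ κ)
    (Λ : ℕ → Matrix (Fin d) (Fin d) ℝ)
    (hΛ : Summable fun j => opNorm (Λ j))
    (X : Ω → EuclideanSpace ℝ (Fin d)) (hX : MemLp X 2 μ)
    (hconv : Tendsto
      (fun n => eLpNorm
        (fun ω => (∑ j ∈ Finset.range (n + 1),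
          Matrix.toEuclideanLin (Λ j) (e j ω)) - X ω) 2 μ)
      atTop (nhds 0)) :
    ∀ m : ℕ,
      Real.sqrt (∫ ω,
          ‖X ω - (μ[X | ⨆ j ∈ Finset.range (m + 1),
              MeasurableSpace.comap (e j) inferInstance]) ω‖ ^ 2 ∂μ) ≤
        κ * ∑' j : ℕ, opNorm (Λ (j + m + 1)) := by
  intro m
  set L : ℕ → EuclideanSpace ℝ (Fin d) →L[ℝ] EuclideanSpace ℝ (Fin d) :=
    fun j => LinearMap.toContinuousLinearMap (Matrix.toEuclideanLin (Λ j))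
  set S : ℕ → Ω → EuclideanSpace ℝ (Fin d) :=
    fun n ω => ∑ j ∈ Finset.range (n + 1), L j (e j ω)
  set T := ∑' j : ℕ, opNorm (Λ (j + m + 1))
  have hκ0 : 0 ≤ κ := (Real.sqrt_nonneg _).trans (hκ 0)
  have he : ∀ j, eLpNorm (e j) 2 μ ≤ ENNReal.ofReal κ := fun j =>
    (ENNReal.le_ofReal_iff_toReal_le (hL2 j).eLpNorm_ne_top hκ0).2
      ((toReal_eLpNorm_two_eq_sqrt_integral (hL2 j).1).trans_le (hκ j))
  have hS : ∀ n, MemLp (S n) 2 μ := fun n =>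
    memLp_finsetSum _ fun j _ => (hL2 j).continuousLinearMap_comp (L j)
  have hT : ENNReal.ofReal T = ∑' j, ‖L (j + (m + 1))‖ₑ :=
    (ENNReal.ofReal_tsum_of_nonneg (fun _ => norm_nonneg _)
      ((summable_nat_add_iff (m + 1)).2 hΛ)).trans (tsum_congr fun _ => ofReal_norm _)
  have htail : ∀ n ≥ m, eLpNorm (S n - S m) 2 μ ≤ ENNReal.ofReal (κ * T) := by
    intro n hn
    have hdiff : S n - S m = fun ω => ∑ j ∈ Finset.Ico (m + 1) (n + 1), L j (e j ω) := by
      ext ω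
      simp [S, Finset.sum_Ico_eq_sub _ (by omega : m + 1 ≤ n + 1)]
    rw [hdiff, ENNReal.ofReal_mul hκ0, hT]
    exact eLpNorm_sum_Ico_clm_comp_le one_le_two (fun j => (hL2 j).1) he _ _
  have hXS : eLpNorm (X - S m) 2 μ ≤ ENNReal.ofReal (κ * T) :=
    eLpNorm_sub_le_of_tendsto one_le_two (fun n => (hS n).1) hX.1 (hS m).1 hconv
      (eventually_atTop.2 ⟨m, htail⟩)
  have hcond := eLpNorm_sub_condExp_le (iSup₂_le fun j _ => (hmeas j).comap_le) hX (hS m)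
    (stronglyMeasurable_sum_iSup_comap (fun j => (L j).continuous) _).aestronglyMeasurable
  refine
    (toReal_eLpNorm_two_eq_sqrt_integral (hX.1.sub (hX.condExp one_le_two).1)).symm.trans_le ?_
  exact ENNReal.toReal_le_of_le_ofReal (mul_nonneg hκ0 (tsum_nonneg fun _ => norm_nonneg _))
    (hcond.trans hXS)

/-- **Near-epoch dependence of a one-sided vector moving average.**
If `X = ∑_{j=0}^∞ Λ_j e_j` in `L²(μ; ℝ^d)`, where the `e_j` are measurable with L²-norms
bounded by `κ` and `∑_j ‖Λ_j‖_op < ∞`, then for every `m` the L²-distance from `X` to its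
conditional expectation given `σ(e_0, …, e_m)` is at most `κ ∑_{j=m+1}^∞ ‖Λ_j‖_op`. -/
theorem vma_near_epoch_dependence
    {Ω : Type*} [MeasurableSpace Ω] (μ : Measure Ω) [IsProbabilityMeasure μ]
    (d : ℕ) (hd : 1 ≤ d)
    (e : ℕ → Ω → EuclideanSpace ℝ (Fin d))
    (hmeas : ∀ j, Measurable (e j))
    (hL2 : ∀ j, MemLp (e j) 2 μ)
    (κ : ℝ) (hκ : ∀ j, Real.sqrt (∫ ω, ‖e j ω‖ ^ 2 ∂μ) ≤ κ)
    (Λ : ℕ → Matrix (Fin d) (Fin d) ℝ)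
    (hΛ : Summable fun j => opNorm (Λ j))
    (X : Ω → EuclideanSpace ℝ (Fin d)) (hX : MemLp X 2 μ)
    (hconv : Tendsto
      (fun n => eLpNorm
        (fun ω => (∑ j ∈ Finset.range (n + 1),
          Matrix.toEuclideanLin (Λ j) (e j ω)) - X ω) 2 μ)
      atTop (nhds 0)) :
    ∀ m : ℕ,
      Real.sqrt (∫ ω,
          ‖X ω - (μ[X | ⨆ j ∈ Finset.range (m + 1),
              MeasurableSpace.comap (e j) inferInstance]) ω‖ ^ 2 ∂μ) ≤
        κ * ∑' j : ℕ, opNorm (Λ (j + m + 1)) :=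
  vma_near_epoch_dependence_general μ d e hmeas hL2 κ hκ Λ hΛ X hX hconv
end
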